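/- For every degree d there is a group homomorphism H̃_d(BD_n^λ; ℤ) → H̃_d(M_N; ℤ) whose kernel has finite exponent dividing λ_1! · λ_2! · ... · λ_n!. -/

import Mathlib

set_option synthInstance.maxHeartbeats 1000000
set_option maxHeartbeats 1000000
set_option linter.unusedSectionVars false

noncomputable section

namespace MatchPaper

attribute [local instance 10] Classical.propDecidable

/-! ### Guarded constructions on additive groups -/

section AddGadgets

variable {A B : Type*} [AddCommGroup A] [AddCommGroup B]

/-- Lift a homomorphism to the quotient (it genuinely descends whenever it kills `S`). -/
def liftOrZero (S : AddSubgroup A) (f : A →+ B) : A ⧸ S →+ B :=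
  if h : S ≤ f.ker then QuotientAddGroup.lift S f h else 0

/-- Descend a homomorphism to quotients (genuine whenever `f S ≤ T`). -/
def descend (S : AddSubgroup A) (T : AddSubgroup B) (f : A →+ B) : A ⧸ S →+ B ⧸ T :=
  if h : S ≤ T.comap f then QuotientAddGroup.map S T f h else 0

/-- Restrict a homomorphism to subgroups (genuine whenever `f Z ≤ Z'`). -/
def restrictHom (f : A →+ B) (Z : AddSubgroup A) (Z' : AddSubgroup B) : Z →+ Z' :=
  if h : ∀ x : Z, f x ∈ Z' then (f.comp Z.subtype).codRestrict Z' (fun x => h x) else 0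

/-- The subquotient `Z / (Bd ∩ Z)`. -/
abbrev subQuot (Z Bd : AddSubgroup A) : Type _ := Z ⧸ Bd.addSubgroupOf Z

/-- The map induced by `f` on subquotients. -/
def subQuotMap (f : A →+ B) (Z Bd : AddSubgroup A) (Z' Bd' : AddSubgroup B) :
    subQuot Z Bd →+ subQuot Z' Bd' :=
  descend (Bd.addSubgroupOf Z) (Bd'.addSubgroupOf Z') (restrictHom f Z Z')

end AddGadgets

/-! ### Chain complexes of abelian groups, group actions, quotient and fixed-difference
subcomplexes, and homology -/

section Abstract

variable (X : ℤ → Type*) [∀ i, AddCommGroup (X i)]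

/-- Transport along an equality of indices. -/
def castAE {i j : ℤ} (h : i = j) : X i ≃+ X j := by subst h; exact AddEquiv.refl _

variable (d : ∀ i : ℤ, X (i + 1) →+ X i)

/-- The boundary map leaving degree `i`. -/
def dfrom (i : ℤ) : X i →+ X (i - 1) :=
  (d (i - 1)).comp (castAE X (show i = (i - 1) + 1 by ring)).toAddMonoidHom

/-- Cycles in degree `i`. -/
def cyc (i : ℤ) : AddSubgroup (X i) := (dfrom X d i).ker

/-- Boundaries in degree `i`. -/
def bdr (i : ℤ) : AddSubgroup (X i) := (d i).range

/-- Homology of the chain complex `(X, d)` in degree `i`. -/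
abbrev Hgrp (i : ℤ) : Type _ := subQuot (cyc X d i) (bdr X d i)

variable {G : Type*} [Group G] (act : G → ∀ i : ℤ, X i ≃+ X i)

/-- The subgroup `C_i^G` generated by the elements `c - g c`. -/
def gsub (i : ℤ) : AddSubgroup (X i) :=
  AddSubgroup.closure {x | ∃ (c : X i) (g : G), x = c - act g i c}

/-- The degree-`i` part of the quotient complex `C/G`. -/
abbrev QX (i : ℤ) : Type _ := X i ⧸ gsub X act i

/-- The boundary map of the quotient complex `C/G`. -/
def qd (i : ℤ) : QX X act (i + 1) →+ QX X act i :=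
  descend (gsub X act (i + 1)) (gsub X act i) (d i)

/-- Homology of the quotient complex `C/G`. -/
abbrev HQgrp (i : ℤ) : Type _ := Hgrp (QX X act) (qd X d act) i

/-- The boundary map of the subcomplex `C^G`. -/
def sd (i : ℤ) : gsub X act (i + 1) →+ gsub X act i :=
  restrictHom (d i) (gsub X act (i + 1)) (gsub X act i)

/-- Homology of the subcomplex `C^G`. -/
abbrev HSgrp (i : ℤ) : Type _ := Hgrp (fun j => gsub X act j) (sd X d act) i

/-- The projection chain map `C → C/G`. -/
def projX (i : ℤ) : X i →+ QX X act i := QuotientAddGroup.mk' _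

/-- The map `π*` induced on homology by the projection `C → C/G`. -/
def piStar (i : ℤ) : Hgrp X d i →+ HQgrp X d act i :=
  subQuotMap (projX X act i) (cyc X d i) (bdr X d i)
    (cyc (QX X act) (qd X d act) i) (bdr (QX X act) (qd X d act) i)

/-- The chain map `φ : C/G → C`, `[c] ↦ ∑ g • c`. -/
def phiX [Fintype G] (i : ℤ) : QX X act i →+ X i :=
  liftOrZero (gsub X act i) (∑ g : G, (act g i).toAddMonoidHom)

/-- The map `φ*` induced on homology by `φ`. -/
def phiStar [Fintype G] (i : ℤ) : HQgrp X d act i →+ Hgrp X d i :=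
  subQuotMap (phiX X act i) (cyc (QX X act) (qd X d act) i) (bdr (QX X act) (qd X d act) i)
    (cyc X d i) (bdr X d i)

end Abstract

/-! ### Guarded constructions on modules -/

section LinGadgets

variable (R : Type*) [CommRing R] {M N : Type*} [AddCommGroup M] [Module R M]
  [AddCommGroup N] [Module R N]

def liftOrZeroL (S : Submodule R M) (f : M →ₗ[R] N) : (M ⧸ S) →ₗ[R] N :=
  if h : S ≤ LinearMap.ker f then S.liftQ f h else 0

def descendL (S : Submodule R M) (T : Submodule R N) (f : M →ₗ[R] N) :
    (M ⧸ S) →ₗ[R] (N ⧸ T) :=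
  if h : S ≤ T.comap f then S.mapQ T f h else 0

def restrictL (f : M →ₗ[R] N) (Z : Submodule R M) (Z' : Submodule R N) : Z →ₗ[R] Z' :=
  if h : ∀ x ∈ Z, f x ∈ Z' then f.restrict h else 0

/-- The subquotient `Z / (Bd ∩ Z)`. -/
abbrev subQuotL (Z Bd : Submodule R M) : Type _ := Z ⧸ Bd.comap Z.subtype

def subQuotMapL (f : M →ₗ[R] N) (Z Bd : Submodule R M) (Z' Bd' : Submodule R N) :
    subQuotL R Z Bd →ₗ[R] subQuotL R Z' Bd' :=
  descendL R (Bd.comap Z.subtype) (Bd'.comap Z'.subtype) (restrictL R f Z Z')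

end LinGadgets

/-! ### Reduced simplicial chains and homology of a family of finite sets

A family `K : Finset V → Prop` of finite subsets of a vertex type `V` (in our applications a
simplicial complex, in particular closed under taking subsets and containing `∅`) has reduced
simplicial chain groups over a ring `R`: the degree-`d` chain group is free on the faces of
cardinality `d + 1`, i.e. we index chain groups by the cardinality `c = d + 1` of the faces,
with the empty face (cardinality `0`, degree `-1`) giving the augmentation.  Orientations are
induced by an injection `rank : V → ℕ` of the vertices into `ℕ`. -/

section Simplicial

variable (R : Type*) [CommRing R]

/-- Chains on the faces of cardinality `c` of the family `K`. -/
abbrev SChain {V : Type*} (K : Finset V → Prop) (c : ℕ) : Type _ :=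
  {σ : Finset V // K σ ∧ σ.card = c} →₀ R

/-- The basis chain of a face, or zero for a non-face. -/
def basisOrZero {V : Type*} (K : Finset V → Prop) (c : ℕ) (τ : Finset V) : SChain R K c :=
  if h : K τ ∧ τ.card = c then Finsupp.single ⟨τ, h⟩ (1 : R) else 0

/-- The simplicial boundary map, with signs determined by the ordering of the vertices via
`rank`. -/
def bdry {V : Type*} [DecidableEq V] (rank : V → ℕ) (K : Finset V → Prop) (c : ℕ) :
    SChain R K (c + 1) →ₗ[R] SChain R K c :=
  Finsupp.lsum R fun σ => LinearMap.toSpanSingleton R _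
    (∑ v ∈ σ.1, ((-1 : ℤ) ^ ((σ.1.filter fun u => rank u < rank v).card) •
      basisOrZero R K c (σ.1.erase v)))

/-- The orientation sign of a map `f` on a face `σ`: the parity of the number of inversions. -/
def mapSign {V W : Type*} (rank : V → ℕ) (rank' : W → ℕ) (f : V → W) (σ : Finset V) : ℤ :=
  (-1) ^ (((σ ×ˢ σ).filter fun p => rank p.1 < rank p.2 ∧ rank' (f p.2) < rank' (f p.1)).card)

/-- The chain map induced by a map `f` on vertices, taking orientations into account. -/
def chainMap {V W : Type*} [DecidableEq V] [DecidableEq W] (rank : V → ℕ) (rank' : W → ℕ)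
    (f : V → W) (K : Finset V → Prop) (K' : Finset W → Prop) (c : ℕ) :
    SChain R K c →ₗ[R] SChain R K' c :=
  Finsupp.lsum R fun σ => LinearMap.toSpanSingleton R _
    (mapSign rank rank' f σ.1 • basisOrZero R K' c (σ.1.image f))

/-- Cycles among the chains on faces of cardinality `c` (for `c = 0` everything is a cycle:
the boundary map leaving degree `-1` is zero). -/
def cycLow {V : Type*} [DecidableEq V] (rank : V → ℕ) (K : Finset V → Prop) :
    (c : ℕ) → Submodule R (SChain R K c)
  | 0 => ⊤
  | (m + 1) => LinearMap.ker (bdry R rank K m)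

/-- Reduced simplicial homology at the faces of cardinality `c`, i.e. in degree `c - 1`. -/
abbrev RHc {V : Type*} [DecidableEq V] (rank : V → ℕ) (K : Finset V → Prop) (c : ℕ) : Type _ :=
  subQuotL R (cycLow R rank K c) (LinearMap.range (bdry R rank K c))

/-- Reduced simplicial homology `H̃_dg(K; R)`. -/
abbrev RH {V : Type*} [DecidableEq V] (rank : V → ℕ) (K : Finset V → Prop) (dg : ℕ) : Type _ :=
  RHc R rank K (dg + 1)

end Simplicial

/-! ### The matching complex and the complexes of graphs of bounded degree -/

/-- The standard injection of pairs into `ℕ`, inducing the lexicographic order. -/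
def rankP (m : ℕ) : Fin m × Fin m → ℕ := fun p => p.1.val * m + p.2.val

/-- A face of the matching complex `M_m`: a set of edges `(i, j)`, `i < j`, of the complete
graph on `Fin m`, no two of which share an endpoint. -/
def IsMatching (m : ℕ) (σ : Finset (Fin m × Fin m)) : Prop :=
  (∀ p ∈ σ, p.1 < p.2) ∧
    ∀ p ∈ σ, ∀ q ∈ σ, p ≠ q → p.1 ≠ q.1 ∧ p.1 ≠ q.2 ∧ p.2 ≠ q.1 ∧ p.2 ≠ q.2

/-- `H̃_dg(M_m; R)`, the reduced homology of the matching complex on `m` vertices. -/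
abbrev MH (R : Type*) [CommRing R] (m dg : ℕ) : Type _ := RH R (rankP m) (IsMatching m) dg

/-- The degree of the vertex `i` in the graph `σ` (a loop `(i, i)` counts twice). -/
def degB {n : ℕ} (σ : Finset (Fin n × Fin n)) (i : Fin n) : ℕ :=
  ∑ p ∈ σ, ((if p.1 = i then 1 else 0) + (if p.2 = i then 1 else 0))

/-- A face of `BD_n^λ`: a graph on `Fin n` (loops allowed, encoded as pairs `(i, j)` with
`i ≤ j`) in which the vertex `i` has degree at most `λ i`. -/
def IsBDGraph {n : ℕ} (lam : Fin n → ℕ) (σ : Finset (Fin n × Fin n)) : Prop :=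
  (∀ p ∈ σ, p.1 ≤ p.2) ∧ ∀ i, degB σ i ≤ lam i

/-- `H̃_dg(BD_n^λ; R)`. -/
abbrev BDH (R : Type*) [CommRing R] {n : ℕ} (lam : Fin n → ℕ) (dg : ℕ) : Type _ :=
  RH R (rankP n) (IsBDGraph lam) dg

/-! ### The Young group action on the matching complex -/

/-- The action of a permutation of the vertices on the edges of the complete graph. -/
def emap {m : ℕ} (g : Equiv.Perm (Fin m)) : Fin m × Fin m → Fin m × Fin m :=
  fun p => (min (g p.1) (g p.2), max (g p.1) (g p.2))

/-- The quotient map on edges induced by a surjection `kap` on vertices (whose fibers are the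
blocks `U_i` of the partition). -/
def kmap {N n : ℕ} (kap : Fin N → Fin n) : Fin N × Fin N → Fin n × Fin n :=
  fun p => (min (kap p.1) (kap p.2), max (kap p.1) (kap p.2))

/-- Membership of a permutation in the Young group: it preserves each block of the partition
determined by `kap`. -/
def KeepsBlocks {N n : ℕ} (kap : Fin N → Fin n) (g : Equiv.Perm (Fin N)) : Prop :=
  ∀ x, kap (g x) = kap x

section YoungAction

variable (R : Type*) [CommRing R]

/-- The action of a permutation `g` of the `N` vertices on chains. -/
def actC (N : ℕ) (K : Finset (Fin N × Fin N) → Prop) (g : Equiv.Perm (Fin N)) (c : ℕ) :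
    SChain R K c →ₗ[R] SChain R K c :=
  chainMap R (rankP N) (rankP N) (emap g) K K c

/-- The submodule of chains generated by the elements `c - g c`, `g` in the Young group. -/
def ysub (N n : ℕ) (kap : Fin N → Fin n) (K : Finset (Fin N × Fin N) → Prop) (c : ℕ) :
    Submodule R (SChain R K c) :=
  Submodule.span R {x | ∃ (ch : SChain R K c) (g : Equiv.Perm (Fin N)),
    KeepsBlocks kap g ∧ x = ch - actC R N K g c ch}

/-- The chains of the quotient complex `C̃/S_λ`. -/
abbrev QC (N n : ℕ) (kap : Fin N → Fin n) (K : Finset (Fin N × Fin N) → Prop) (c : ℕ) :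
    Type _ :=
  SChain R K c ⧸ ysub R N n kap K c

/-- The boundary map of the quotient complex `C̃/S_λ`. -/
def qbdry (N n : ℕ) (kap : Fin N → Fin n) (K : Finset (Fin N × Fin N) → Prop) (c : ℕ) :
    QC R N n kap K (c + 1) →ₗ[R] QC R N n kap K c :=
  descendL R (ysub R N n kap K (c + 1)) (ysub R N n kap K c) (bdry R (rankP N) K c)

/-- Homology of the quotient complex `C̃(M_N)/S_λ` in degree `dg`. -/
abbrev QMH (N n : ℕ) (kap : Fin N → Fin n) (dg : ℕ) : Type _ :=
  subQuotL R (LinearMap.ker (qbdry R N n kap (IsMatching N) dg))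
    (LinearMap.range (qbdry R N n kap (IsMatching N) (dg + 1)))

/-- The chain map `φ : C̃/S_λ → C̃`, `[c] ↦ ∑_{g ∈ S_λ} g c`. -/
def phiC (N n : ℕ) (kap : Fin N → Fin n) (K : Finset (Fin N × Fin N) → Prop) (c : ℕ) :
    QC R N n kap K c →ₗ[R] SChain R K c :=
  liftOrZeroL R (ysub R N n kap K c)
    (∑ g ∈ Finset.univ.filter (fun g : Equiv.Perm (Fin N) => ∀ x, kap (g x) = kap x),
      actC R N K g c)

/-- The map `φ* : H_dg(C̃(M_N)/S_λ) → H̃_dg(M_N; R)` induced by `φ`. -/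
def phiStarM (N n : ℕ) (kap : Fin N → Fin n) (dg : ℕ) :
    QMH R N n kap dg →ₗ[R] MH R N dg :=
  subQuotMapL R (phiC R N n kap (IsMatching N) (dg + 1))
    (LinearMap.ker (qbdry R N n kap (IsMatching N) dg))
    (LinearMap.range (qbdry R N n kap (IsMatching N) (dg + 1)))
    (cycLow R (rankP N) (IsMatching N) (dg + 1))
    (LinearMap.range (bdry R (rankP N) (IsMatching N) (dg + 1)))

end YoungAction

/-! ### The subfamilies `Δ_λ` and `Γ_λ` of the matching complex -/

/-- `σ` contains two distinct edges `ab`, `cd` with `a, c` in the same block and `b, d` in the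
same block. -/
def InDelta {N n : ℕ} (kap : Fin N → Fin n) (σ : Finset (Fin N × Fin N)) : Prop :=
  ∃ p ∈ σ, ∃ q ∈ σ, p ≠ q ∧
    ((kap p.1 = kap q.1 ∧ kap p.2 = kap q.2) ∨ (kap p.1 = kap q.2 ∧ kap p.2 = kap q.1))

/-- A face of `Δ_λ`. -/
def IsDelta {N n : ℕ} (kap : Fin N → Fin n) (σ : Finset (Fin N × Fin N)) : Prop :=
  IsMatching N σ ∧ InDelta kap σ

/-- A face of `Γ_λ = M_N \ Δ_λ`. -/
def IsGamma {N n : ℕ} (kap : Fin N → Fin n) (σ : Finset (Fin N × Fin N)) : Prop :=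
  IsMatching N σ ∧ ¬ InDelta kap σ

section YoungMore

variable (R : Type*) [CommRing R]

/-- The map `κ̂ : C̃(Γ_λ)/S_λ → C̃(BD_n^λ)`, `[c] ↦ κ(c)`. -/
def khat (N n : ℕ) (kap : Fin N → Fin n) (lam : Fin n → ℕ) (c : ℕ) :
    QC R N n kap (IsGamma kap) c →ₗ[R] SChain R (IsBDGraph lam) c :=
  liftOrZeroL R (ysub R N n kap (IsGamma kap) c)
    (chainMap R (rankP N) (rankP n) (kmap kap) (IsGamma kap) (IsBDGraph lam) c)

/-- The boundary map of the subcomplex `C̃(M_N; R)^{S_λ}`. -/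
def sbdry (N n : ℕ) (kap : Fin N → Fin n) (c : ℕ) :
    ysub R N n kap (IsMatching N) (c + 1) →ₗ[R] ysub R N n kap (IsMatching N) c :=
  restrictL R (bdry R (rankP N) (IsMatching N) c)
    (ysub R N n kap (IsMatching N) (c + 1)) (ysub R N n kap (IsMatching N) c)

/-- Homology of the subcomplex `C̃(M_N; R)^{S_λ}` in degree `dg`: the cycles of the
subcomplex (elements of the subcomplex with vanishing boundary) modulo the boundaries of
elements of the subcomplex. -/
abbrev SubH (N n : ℕ) (kap : Fin N → Fin n) (dg : ℕ) : Type _ :=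
  subQuotL R
    (ysub R N n kap (IsMatching N) (dg + 1) ⊓ cycLow R (rankP N) (IsMatching N) (dg + 1))
    ((ysub R N n kap (IsMatching N) (dg + 1 + 1)).map (bdry R (rankP N) (IsMatching N) (dg + 1)))

/-! ### Inclusion maps between matching complexes -/

/-- The chain map induced by the inclusion `M_m ⊆ M_{m'}`. -/
def inclChain (m m' : ℕ) (h : m ≤ m') (c : ℕ) :
    SChain R (IsMatching m) c →ₗ[R] SChain R (IsMatching m') c :=
  chainMap R (rankP m) (rankP m') (fun p => (Fin.castLE h p.1, Fin.castLE h p.2))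
    (IsMatching m) (IsMatching m') c

/-- The map `H̃_dg(M_m; R) → H̃_dg(M_{m'}; R)` induced by the inclusion. -/
def inclStar (m m' : ℕ) (h : m ≤ m') (dg : ℕ) : MH R m dg →ₗ[R] MH R m' dg :=
  subQuotMapL R (inclChain R m m' h (dg + 1))
    (cycLow R (rankP m) (IsMatching m) (dg + 1))
    (LinearMap.range (bdry R (rankP m) (IsMatching m) (dg + 1)))
    (cycLow R (rankP m') (IsMatching m') (dg + 1))
    (LinearMap.range (bdry R (rankP m') (IsMatching m') (dg + 1)))

/-! ### The pair `(M_m, M_m \ e)`, where `e` is the last edge -/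

/-- The edge `e` between the last two of the `m` vertices. -/
def eEdge (m : ℕ) (h : 2 ≤ m) : Fin m × Fin m := (⟨m - 2, by omega⟩, ⟨m - 1, by omega⟩)

/-- A face of `M_m \ e`: a matching not containing the edge `e`. -/
def MnMinusE (m : ℕ) (h : 2 ≤ m) (σ : Finset (Fin m × Fin m)) : Prop :=
  IsMatching m σ ∧ eEdge m h ∉ σ

/-- Pass from a set of edges avoiding the last two vertices of `Fin m` to a set of edges on
`Fin (m - 2)`. -/
def shrink (m : ℕ) (σ : Finset (Fin m × Fin m)) : Finset (Fin (m - 2) × Fin (m - 2)) :=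
  (σ.filter fun p => p.1.val < m - 2 ∧ p.2.val < m - 2).attach.image
    fun p => (⟨p.1.1.val, (Finset.mem_filter.mp p.2).2.1⟩,
              ⟨p.1.2.val, (Finset.mem_filter.mp p.2).2.2⟩)

/-- The chain map realizing the composition
`C̃(M_m) → C̃(M_m, M_m \ e) ≅ C̃(M_{m - 2})[1]`: a face `σ` containing `e` is written as
`σ = ± e ∧ w` and sent to `± w`, viewed in the matching complex on the remaining `m - 2`
vertices; a face not containing `e` is sent to zero. -/
def theta (m : ℕ) (hm : 2 ≤ m) (c : ℕ) :
    SChain R (IsMatching m) (c + 1) →ₗ[R] SChain R (IsMatching (m - 2)) c :=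
  Finsupp.lsum R fun σ => LinearMap.toSpanSingleton R _
    (if eEdge m hm ∈ σ.1 then
      ((-1 : ℤ) ^ c) • basisOrZero R (IsMatching (m - 2)) c (shrink m (σ.1.erase (eEdge m hm)))
     else 0)

/-- The map `H̃_dg(M_m \ e; R) → H̃_dg(M_m; R)` induced by the inclusion. -/
def inclEStar (m : ℕ) (hm : 2 ≤ m) (dg : ℕ) :
    RH R (rankP m) (MnMinusE m hm) dg →ₗ[R] MH R m dg :=
  subQuotMapL R (chainMap R (rankP m) (rankP m) id (MnMinusE m hm) (IsMatching m) (dg + 1))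
    (cycLow R (rankP m) (MnMinusE m hm) (dg + 1))
    (LinearMap.range (bdry R (rankP m) (MnMinusE m hm) (dg + 1)))
    (cycLow R (rankP m) (IsMatching m) (dg + 1))
    (LinearMap.range (bdry R (rankP m) (IsMatching m) (dg + 1)))

/-- The composition `H̃_dg(M_m; R) → H_dg(M_m, M_m \ e; R) ≅ H̃_{dg - 1}(M_{m - 2}; R)` of the
map to relative homology with the canonical isomorphism. -/
def thetaStar (m : ℕ) (hm : 2 ≤ m) (dg : ℕ) :
    MH R m dg →ₗ[R] RHc R (rankP (m - 2)) (IsMatching (m - 2)) dg :=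
  subQuotMapL R (theta R m hm dg)
    (cycLow R (rankP m) (IsMatching m) (dg + 1))
    (LinearMap.range (bdry R (rankP m) (IsMatching m) (dg + 1)))
    (cycLow R (rankP (m - 2)) (IsMatching (m - 2)) dg)
    (LinearMap.range (bdry R (rankP (m - 2)) (IsMatching (m - 2)) dg))

end YoungMore

end MatchPaper

end

/-! ### Auxiliary development for Statement 12 -/

noncomputable section
namespace MatchPaper

attribute [local instance 10] Classical.propDecidable

open Finset

/-! #### Sign generalities -/

lemma negOnePow_congr {a b : ℕ} (h : a % 2 = b % 2) : ((-1 : ℤ)) ^ a = (-1) ^ b := by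
  conv_lhs => rw [← Nat.div_add_mod a 2]
  conv_rhs => rw [← Nat.div_add_mod b 2]
  rw [pow_add, pow_add, pow_mul, pow_mul]
  norm_num [h]

lemma negOnePow_add_eq_zero {a b : ℕ} (h : a % 2 ≠ b % 2) :
    ((-1 : ℤ)) ^ a + (-1) ^ b = 0 := by
  rw [negOnePow_congr (a := a) (b := a % 2) (by omega),
    negOnePow_congr (a := b) (b := b % 2) (by omega)]
  rcases Nat.mod_two_eq_zero_or_one a with ha | ha <;>
    rcases Nat.mod_two_eq_zero_or_one b with hb | hb <;>
      rw [ha, hb] at h ⊢ <;> norm_num at *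

section Signs

variable {V W : Type*} [DecidableEq V] [DecidableEq W]

/-- The simplicial sign of deleting `v` from `s`. -/
def eps (r : V → ℕ) (s : Finset V) (v : V) : ℤ :=
  (-1) ^ ((s.filter fun u => r u < r v).card)

/-- The inversion count underlying `mapSign`. -/
def inv2 (r : V → ℕ) (r' : W → ℕ) (f : V → W) (s : Finset V) : ℕ :=
  ((s ×ˢ s).filter fun p => r p.1 < r p.2 ∧ r' (f p.2) < r' (f p.1)).card

lemma mapSign_eq (r : V → ℕ) (r' : W → ℕ) (f : V → W) (s : Finset V) :
    mapSign r r' f s = (-1) ^ inv2 r r' f s := rfl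

lemma mapSign_mul_self (r : V → ℕ) (r' : W → ℕ) (f : V → W) (s : Finset V) :
    mapSign r r' f s * mapSign r r' f s = 1 := by
  rw [mapSign_eq, ← pow_add]
  exact (neg_one_pow_eq_one_iff_even (by norm_num)).2 (Even.add_self _)

lemma inv2_erase (r : V → ℕ) (r' : W → ℕ) (f : V → W) (s : Finset V) (e : V)
    (he : e ∈ s) :
    inv2 r r' f s = inv2 r r' f (s.erase e)
      + (s.filter fun q => r e < r q ∧ r' (f q) < r' (f e)).card
      + (s.filter fun q => r q < r e ∧ r' (f e) < r' (f q)).card := by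
  classical
  set I : V → V → ℕ := fun x y => if r x < r y ∧ r' (f y) < r' (f x) then 1 else 0 with hI
  have key : ∀ t : Finset V, inv2 r r' f t = ∑ x ∈ t, ∑ y ∈ t, I x y := by
    intro t
    rw [inv2, Finset.card_filter, Finset.sum_product]
  have hIee : I e e = 0 := by simp [hI]
  have hout : ∑ x ∈ s.erase e, ∑ y ∈ s, I x y + ∑ y ∈ s, I e y
      = ∑ x ∈ s, ∑ y ∈ s, I x y := Finset.sum_erase_add s _ he
  have hin : ∀ x, ∑ y ∈ s.erase e, I x y + I x e = ∑ y ∈ s, I x y := by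
    intro x
    exact Finset.sum_erase_add s _ he
  have hcol : ∑ x ∈ s.erase e, I x e + I e e = ∑ x ∈ s, I x e :=
    Finset.sum_erase_add s _ he
  have h2 : ∑ x ∈ s, I x e = (s.filter fun q => r q < r e ∧ r' (f e) < r' (f q)).card := by
    rw [Finset.card_filter]
  have h3 : ∑ y ∈ s, I e y = (s.filter fun q => r e < r q ∧ r' (f q) < r' (f e)).card := by
    rw [Finset.card_filter]
  have hmain : ∑ x ∈ s.erase e, ∑ y ∈ s, I x y
      = (∑ x ∈ s.erase e, ∑ y ∈ s.erase e, I x y) + ∑ x ∈ s.erase e, I x e := by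
    rw [← Finset.sum_add_distrib]
    exact Finset.sum_congr rfl fun x _ => (hin x).symm
  rw [key, key]
  omega

lemma sign_parity {r : V → ℕ} {r' : W → ℕ} (hr : Function.Injective r)
    (hr' : Function.Injective r') {f : V → W} {s : Finset V} (hf : Set.InjOn f s)
    {e : V} (he : e ∈ s) :
    ((s.filter fun u => r u < r e).card + inv2 r r' f s) % 2
      = (((s.image f).filter fun b => r' b < r' (f e)).card
          + inv2 r r' f (s.erase e)) % 2 := by
  classical
  have hsplit := inv2_erase r r' f s e he
  have hB : ((s.image f).filter fun b => r' b < r' (f e)).card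
      = (s.filter fun q => r' (f q) < r' (f e)).card := by
    rw [Finset.filter_image]
    exact Finset.card_image_of_injOn (hf.mono (by
      simpa using Finset.coe_subset.2 (Finset.filter_subset (fun a => r' (f a) < r' (f e)) s)))
  have heven : 2 ∣ ((s.filter fun u => r u < r e).card
      + (s.filter fun q => r e < r q ∧ r' (f q) < r' (f e)).card
      + (s.filter fun q => r q < r e ∧ r' (f e) < r' (f q)).card
      + (s.filter fun q => r' (f q) < r' (f e)).card) := by
    rw [Finset.card_filter, Finset.card_filter, Finset.card_filter, Finset.card_filter,
      ← Finset.sum_add_distrib, ← Finset.sum_add_distrib, ← Finset.sum_add_distrib]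
    refine Finset.dvd_sum fun q hq => ?_
    by_cases hqe : q = e
    · subst hqe
      simp
    · have hrne : r q ≠ r e := fun h => hqe (hr h)
      have hfne : r' (f q) ≠ r' (f e) := fun h => hqe (hf hq he (hr' h))
      rcases lt_or_gt_of_ne hrne with ha | ha <;> rcases lt_or_gt_of_ne hfne with hb | hb <;>
        simp [ha, hb, asymm ha, asymm hb]
  omega

lemma sign_compat {r : V → ℕ} {r' : W → ℕ} (hr : Function.Injective r)
    (hr' : Function.Injective r') {f : V → W} {s : Finset V} (hf : Set.InjOn f s)
    {e : V} (he : e ∈ s) :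
    eps r s e * mapSign r r' f s = eps r' (s.image f) (f e) * mapSign r r' f (s.erase e) := by
  unfold eps
  rw [mapSign_eq, mapSign_eq, ← pow_add, ← pow_add]
  apply negOnePow_congr
  have := sign_parity hr hr' hf he
  omega

lemma sign_compat' {r : V → ℕ} {r' : W → ℕ} (hr : Function.Injective r)
    (hr' : Function.Injective r') {f : V → W} {s : Finset V} (hf : Set.InjOn f s)
    {e : V} (he : e ∈ s) :
    mapSign r r' f s * eps r s e
      = eps r' (s.image f) (f e) * mapSign r r' f (s.erase e) := by
  unfold eps
  rw [mapSign_eq, mapSign_eq, ← pow_add, ← pow_add]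
  apply negOnePow_congr
  have := sign_parity hr hr' hf he
  omega

lemma sign_compat'' {r : V → ℕ} {r' : W → ℕ} (hr : Function.Injective r)
    (hr' : Function.Injective r') {f : V → W} {s : Finset V} (hf : Set.InjOn f s)
    {e : V} (he : e ∈ s) :
    eps r s e * mapSign r r' f (s.erase e)
      = mapSign r r' f s * eps r' (s.image f) (f e) := by
  unfold eps
  rw [mapSign_eq, mapSign_eq, ← pow_add, ← pow_add]
  apply negOnePow_congr
  have := sign_parity hr hr' hf he
  omega

lemma sign_cancel {r : V → ℕ} {r' : W → ℕ} (hr : Function.Injective r)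
    (hr' : Function.Injective r') {f : V → W} {s : Finset V}
    {e₀ e₁ : V} (h₀ : e₀ ∈ s) (h₁ : e₁ ∈ s) (hne : e₀ ≠ e₁) (hfe : f e₀ = f e₁)
    (hinj₀ : Set.InjOn f (s.erase e₀ : Finset V)) :
    eps r s e₀ * mapSign r r' f (s.erase e₀)
      + eps r s e₁ * mapSign r r' f (s.erase e₁) = 0 := by
  classical
  have h₁' : e₁ ∈ s.erase e₀ := Finset.mem_erase.2 ⟨Ne.symm hne, h₁⟩
  have hre : r e₀ ≠ r e₁ := fun h => hne (hr h)
  have hsplit0 := inv2_erase r r' f s e₀ h₀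
  have hsplit1 := inv2_erase r r' f s e₁ h₁
  rw [← hfe] at hsplit1
  set t : V → ℕ := fun q =>
    (if r q < r e₀ then 1 else 0) + (if r q < r e₁ then 1 else 0)
    + (if r e₀ < r q ∧ r' (f q) < r' (f e₀) then 1 else 0)
    + (if r q < r e₀ ∧ r' (f e₀) < r' (f q) then 1 else 0)
    + (if r e₁ < r q ∧ r' (f q) < r' (f e₀) then 1 else 0)
    + (if r q < r e₁ ∧ r' (f e₀) < r' (f q) then 1 else 0) with ht
  have hsum6 : (s.filter fun u => r u < r e₀).card + (s.filter fun u => r u < r e₁).card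
      + (s.filter fun q => r e₀ < r q ∧ r' (f q) < r' (f e₀)).card
      + (s.filter fun q => r q < r e₀ ∧ r' (f e₀) < r' (f q)).card
      + (s.filter fun q => r e₁ < r q ∧ r' (f q) < r' (f e₀)).card
      + (s.filter fun q => r q < r e₁ ∧ r' (f e₀) < r' (f q)).card
      = ∑ q ∈ s, t q := by
    rw [Finset.card_filter, Finset.card_filter, Finset.card_filter, Finset.card_filter,
      Finset.card_filter, Finset.card_filter,
      ← Finset.sum_add_distrib, ← Finset.sum_add_distrib, ← Finset.sum_add_distrib,
      ← Finset.sum_add_distrib, ← Finset.sum_add_distrib]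
  have hsplit : ∑ q ∈ s, t q = (∑ q ∈ (s.erase e₀).erase e₁, t q + t e₁) + t e₀ := by
    rw [Finset.sum_erase_add _ _ h₁', Finset.sum_erase_add _ _ h₀]
  have hrest : 2 ∣ ∑ q ∈ (s.erase e₀).erase e₁, t q := by
    refine Finset.dvd_sum fun q hq => ?_
    have hq1 : q ≠ e₁ := (Finset.mem_erase.1 hq).1
    have hq' : q ∈ s.erase e₀ := (Finset.mem_erase.1 hq).2
    have hq0 : q ≠ e₀ := (Finset.mem_erase.1 hq').1
    have hqs : q ∈ s := Finset.mem_erase.1 hq' |>.2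
    have hfq : r' (f q) ≠ r' (f e₀) := by
      intro h
      have : f q = f e₁ := by rw [← hfe]; exact hr' h
      exact hq1 (hinj₀ hq' h₁' this)
    have hr0 : r q ≠ r e₀ := fun h => hq0 (hr h)
    have hr1 : r q ≠ r e₁ := fun h => hq1 (hr h)
    rw [ht]
    rcases lt_or_gt_of_ne hr0 with ha | ha <;> rcases lt_or_gt_of_ne hr1 with hb | hb <;>
      rcases lt_or_gt_of_ne hfq with hc | hc <;>
        simp [ha, hb, hc, asymm ha, asymm hb, asymm hc] <;> omega
  have h01 : t e₀ + t e₁ = 1 := by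
    rw [ht]
    simp only
    rcases lt_or_gt_of_ne hre with ha | ha <;>
      simp [ha, asymm ha, lt_irrefl, hfe] <;> omega
  unfold eps
  rw [mapSign_eq, mapSign_eq, ← pow_add, ← pow_add]
  apply negOnePow_add_eq_zero
  omega

lemma image_erase_injOn {f : V → W} {s : Finset V} (hf : Set.InjOn f s) {e : V}
    (he : e ∈ s) : (s.erase e).image f = (s.image f).erase (f e) := by
  ext b
  simp only [mem_image, mem_erase]
  constructor
  · rintro ⟨x, ⟨hxe, hxs⟩, rfl⟩
    exact ⟨fun hcon => hxe (hf hxs he hcon), ⟨x, hxs, rfl⟩⟩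
  · rintro ⟨hbe, x, hxs, rfl⟩
    exact ⟨x, ⟨fun hcon => hbe (by rw [hcon]), hxs⟩, rfl⟩

/-- Structure of a finset whose image drops cardinality by exactly one. -/
lemma collision_structure {f : V → W} {s : Finset V} {c : ℕ} (hcard : s.card = c + 1)
    (himg : (s.image f).card = c) :
    ∃ e₀ e₁, e₀ ∈ s ∧ e₁ ∈ s ∧ e₀ ≠ e₁ ∧ f e₀ = f e₁ ∧
      Set.InjOn f (s.erase e₀ : Finset V) ∧ Set.InjOn f (s.erase e₁ : Finset V) ∧
      (s.erase e₀).image f = s.image f ∧ (s.erase e₁).image f = s.image f ∧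
      ∀ e ∈ s, e ≠ e₀ → e ≠ e₁ → ((s.erase e).image f).card < c := by
  classical
  have hnoinj : ¬ Set.InjOn f (s : Set V) := by
    intro hinj
    rw [Finset.card_image_of_injOn hinj, hcard] at himg
    omega
  obtain ⟨e₀, h₀, e₁, h₁, hne, hfe⟩ :
      ∃ e₀ ∈ s, ∃ e₁ ∈ s, e₀ ≠ e₁ ∧ f e₀ = f e₁ := by
    by_contra hc
    push_neg at hc
    exact hnoinj fun x hx y hy hxy => by_contra fun hne =>
      (hc x (by exact_mod_cast hx) y (by exact_mod_cast hy) hne) hxy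
  have himg0 : (s.erase e₀).image f = s.image f := by
    apply Finset.Subset.antisymm (Finset.image_subset_image (Finset.erase_subset _ _))
    intro b hb
    obtain ⟨x, hx, rfl⟩ := Finset.mem_image.1 hb
    by_cases hx0 : x = e₀
    · subst hx0
      exact Finset.mem_image.2 ⟨e₁, Finset.mem_erase.2 ⟨Ne.symm hne, h₁⟩, hfe.symm⟩
    · exact Finset.mem_image.2 ⟨x, Finset.mem_erase.2 ⟨hx0, hx⟩, rfl⟩
  have himg1 : (s.erase e₁).image f = s.image f := by
    apply Finset.Subset.antisymm (Finset.image_subset_image (Finset.erase_subset _ _))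
    intro b hb
    obtain ⟨x, hx, rfl⟩ := Finset.mem_image.1 hb
    by_cases hx1 : x = e₁
    · subst hx1
      exact Finset.mem_image.2 ⟨e₀, Finset.mem_erase.2 ⟨hne, h₀⟩, hfe⟩
    · exact Finset.mem_image.2 ⟨x, Finset.mem_erase.2 ⟨hx1, hx⟩, rfl⟩
  have hinj0 : Set.InjOn f ((s.erase e₀ : Finset V) : Set V) := by
    apply Finset.card_image_iff.1
    rw [himg0, himg, Finset.card_erase_of_mem h₀, hcard]
    omega
  have hinj1 : Set.InjOn f ((s.erase e₁ : Finset V) : Set V) := by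
    apply Finset.card_image_iff.1
    rw [himg1, himg, Finset.card_erase_of_mem h₁, hcard]
    omega
  refine ⟨e₀, e₁, h₀, h₁, hne, hfe, hinj0, hinj1, himg0, himg1, ?_⟩
  intro e hes he0 he1
  have hnoinj' : ¬ Set.InjOn f ((s.erase e : Finset V) : Set V) := by
    intro hinj
    exact hne (hinj (Finset.mem_coe.2 (Finset.mem_erase.2 ⟨Ne.symm he0, h₀⟩))
      (Finset.mem_coe.2 (Finset.mem_erase.2 ⟨Ne.symm he1, h₁⟩)) hfe)
  have hle := Finset.card_image_le (s := s.erase e) (f := f)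
  have hne' : ((s.erase e).image f).card ≠ (s.erase e).card :=
    fun h => hnoinj' (Finset.card_image_iff.1 h)
  rw [Finset.card_erase_of_mem hes, hcard] at hle hne'
  omega

end Signs

/-! #### Evaluation lemmas for the chain-level constructions -/

section Eval

variable {V : Type*} [DecidableEq V]

lemma basisOrZero_pos (K : Finset V → Prop) (c : ℕ) (τ : Finset V)
    (h : K τ ∧ τ.card = c) :
    basisOrZero ℤ K c τ = Finsupp.single (⟨τ, h⟩ : {σ : Finset V // K σ ∧ σ.card = c}) 1 :=
  dif_pos h

lemma basisOrZero_neg (K : Finset V → Prop) (c : ℕ) (τ : Finset V)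
    (h : ¬ (K τ ∧ τ.card = c)) : basisOrZero ℤ K c τ = 0 :=
  dif_neg h

lemma bdry_single (rank : V → ℕ) (K : Finset V → Prop) (c : ℕ)
    (σ : {σ : Finset V // K σ ∧ σ.card = c + 1}) :
    bdry ℤ rank K c (Finsupp.single σ 1)
      = ∑ v ∈ σ.1, eps rank σ.1 v • basisOrZero ℤ K c (σ.1.erase v) := by
  unfold bdry eps
  rw [Finsupp.lsum_single, LinearMap.toSpanSingleton_apply, one_smul]

lemma chainMap_single {W : Type*} [DecidableEq W] (rank : V → ℕ) (rank' : W → ℕ)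
    (f : V → W) (K : Finset V → Prop) (K' : Finset W → Prop) (c : ℕ)
    (σ : {σ : Finset V // K σ ∧ σ.card = c}) :
    chainMap ℤ rank rank' f K K' c (Finsupp.single σ 1)
      = mapSign rank rank' f σ.1 • basisOrZero ℤ K' c (σ.1.image f) := by
  unfold chainMap
  rw [Finsupp.lsum_single, LinearMap.toSpanSingleton_apply, one_smul]

end Eval

/-! #### Matchings and graphs -/

lemma rankP_injective (m : ℕ) : Function.Injective (rankP m) := by
  rintro ⟨p1, p2⟩ ⟨q1, q2⟩ h
  unfold rankP at h
  simp only at h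
  have h2 := p2.2
  have h2' := q2.2
  have e1 : p1.val = q1.val := by
    rcases Nat.lt_trichotomy p1.val q1.val with h' | h' | h'
    · exfalso
      have hh : (p1.val + 1) * m ≤ q1.val * m := Nat.mul_le_mul_right m h'
      rw [Nat.succ_mul] at hh
      omega
    · exact h'
    · exfalso
      have hh : (q1.val + 1) * m ≤ p1.val * m := Nat.mul_le_mul_right m h'
      rw [Nat.succ_mul] at hh
      omega
  rw [e1] at h
  have : p2.val = q2.val := by omega
  ext <;> simp [e1, this]

/-- The set of vertices used by a set of edges. -/
def verts {N : ℕ} (w : Finset (Fin N × Fin N)) : Finset (Fin N) :=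
  w.biUnion fun p => {p.1, p.2}

lemma mem_verts {N : ℕ} {w : Finset (Fin N × Fin N)} {x : Fin N} :
    x ∈ verts w ↔ ∃ p ∈ w, x = p.1 ∨ x = p.2 := by
  simp [verts, or_comm, eq_comm]

lemma matching_subset {N : ℕ} {σ τ : Finset (Fin N × Fin N)} (h : IsMatching N σ)
    (hsub : τ ⊆ σ) : IsMatching N τ :=
  ⟨fun p hp => h.1 p (hsub hp), fun p hp q hq hpq => h.2 p (hsub hp) q (hsub hq) hpq⟩

lemma matching_insert {N : ℕ} {w : Finset (Fin N × Fin N)} (hw : IsMatching N w)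
    {e : Fin N × Fin N} (he : e.1 < e.2) (h1 : e.1 ∉ verts w) (h2 : e.2 ∉ verts w) :
    IsMatching N (insert e w) := by
  constructor
  · intro p hp
    rcases Finset.mem_insert.1 hp with rfl | hp
    · exact he
    · exact hw.1 p hp
  · intro p hp q hq hpq
    have key : ∀ u : Fin N × Fin N, u ∈ w →
        e.1 ≠ u.1 ∧ e.1 ≠ u.2 ∧ e.2 ≠ u.1 ∧ e.2 ≠ u.2 := by
      intro u hu
      have hu1 : u.1 ∈ verts w := mem_verts.2 ⟨u, hu, Or.inl rfl⟩
      have hu2 : u.2 ∈ verts w := mem_verts.2 ⟨u, hu, Or.inr rfl⟩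
      exact ⟨fun h => h1 (by rw [h]; exact hu1), fun h => h1 (by rw [h]; exact hu2),
        fun h => h2 (by rw [h]; exact hu1), fun h => h2 (by rw [h]; exact hu2)⟩
    rcases Finset.mem_insert.1 hp with hpe | hpw
    · rcases Finset.mem_insert.1 hq with hqe | hqw
      · exact absurd (hpe.trans hqe.symm) hpq
      · subst hpe
        exact key q hqw
    · rcases Finset.mem_insert.1 hq with hqe | hqw
      · subst hqe
        obtain ⟨k1, k2, k3, k4⟩ := key p hpw
        exact ⟨k1.symm, k3.symm, k2.symm, k4.symm⟩
      · exact hw.2 p hpw q hqw hpq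

lemma not_mem_verts_erase {N : ℕ} {σ : Finset (Fin N × Fin N)}
    (hσ : IsMatching N σ) {e : Fin N × Fin N} (he : e ∈ σ) :
    e.1 ∉ verts (σ.erase e) ∧ e.2 ∉ verts (σ.erase e) := by
  constructor <;> intro hc <;> obtain ⟨p, hp, hor⟩ := mem_verts.1 hc <;>
    obtain ⟨hpne, hps⟩ := Finset.mem_erase.1 hp <;>
      obtain ⟨k1, k2, k3, k4⟩ := hσ.2 e he p hps (Ne.symm hpne)
  · rcases hor with h | h
    · exact k1 h
    · exact k2 h
  · rcases hor with h | h
    · exact k3 h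
    · exact k4 h

lemma isBD_subset {n : ℕ} {lam : Fin n → ℕ} {σ τ : Finset (Fin n × Fin n)}
    (h : IsBDGraph lam σ) (hsub : τ ⊆ σ) : IsBDGraph lam τ := by
  refine ⟨fun p hp => h.1 p (hsub hp), fun i => le_trans ?_ (h.2 i)⟩
  exact Finset.sum_le_sum_of_subset hsub

section Blocks

variable {N n : ℕ} (lam : Fin n → ℕ) (kap : Fin N → Fin n)

/-- `kap` realizes the partition `lam`. -/
def KapFib : Prop := ∀ i, (univ.filter fun x => kap x = i).card = lam i

lemma sum_image_le {α β : Type*} [DecidableEq β] (s : Finset α) (f : α → β) (g : β → ℕ) :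
    ∑ b ∈ s.image f, g b ≤ ∑ a ∈ s, g (f a) := by
  classical
  induction s using Finset.induction_on with
  | empty => simp
  | @insert a s ha ih =>
    rw [Finset.image_insert, Finset.sum_insert ha]
    by_cases hmem : f a ∈ s.image f
    · rw [Finset.insert_eq_self.2 hmem]
      exact ih.trans (Nat.le_add_left _ _)
    · rw [Finset.sum_insert hmem]
      exact Nat.add_le_add_left ih _

/-- Number of endpoints of the edge `p` lying in block `i`. -/
def eptc (i : Fin n) (p : Fin N × Fin N) : ℕ :=
  (if kap p.1 = i then 1 else 0) + (if kap p.2 = i then 1 else 0)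

lemma eptc_kmap (i : Fin n) (p : Fin N × Fin N) :
    ((if (kmap kap p).1 = i then 1 else 0) + (if (kmap kap p).2 = i then 1 else 0) : ℕ)
      = eptc kap i p := by
  unfold kmap eptc
  rcases le_total (kap p.1) (kap p.2) with h | h
  · rw [min_eq_left h, max_eq_right h]
  · rw [min_eq_right h, max_eq_left h]
    exact add_comm _ _

lemma mem_FreeF' {w : Finset (Fin N × Fin N)} {i : Fin n} {x : Fin N} : True := trivial

lemma verts_filter_card_eq {σ : Finset (Fin N × Fin N)} (hσ : IsMatching N σ) (i : Fin n) :
    ((verts σ).filter fun x => kap x = i).card = ∑ p ∈ σ, eptc kap i p := by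
  unfold verts
  rw [Finset.filter_biUnion, Finset.card_biUnion]
  · refine Finset.sum_congr rfl fun p hp => ?_
    have hne : p.1 ≠ p.2 := ne_of_lt (hσ.1 p hp)
    unfold eptc
    by_cases h1 : kap p.1 = i <;> by_cases h2 : kap p.2 = i <;>
      simp [Finset.filter_insert, Finset.filter_singleton, h1, h2, hne,
        Finset.card_insert_of_notMem]
  · intro p hp q hq hpq
    have h := hσ.2 p hp q hq hpq
    refine Finset.disjoint_filter_filter ?_
    rw [Finset.disjoint_left]
    intro x hx1 hx2
    simp only [Finset.mem_insert, Finset.mem_singleton] at hx1 hx2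
    rcases hx1 with rfl | rfl <;> rcases hx2 with h' | h'
    · exact h.1 h'
    · exact h.2.1 h'
    · exact h.2.2.1 h'
    · exact h.2.2.2 h' 

lemma degB_image_le (hkap : KapFib lam kap) {σ : Finset (Fin N × Fin N)}
    (hσ : IsMatching N σ) (i : Fin n) : degB (σ.image (kmap kap)) i ≤ lam i := by
  have hle : degB (σ.image (kmap kap)) i
      ≤ ∑ p ∈ σ, ((if (kmap kap p).1 = i then 1 else 0)
        + (if (kmap kap p).2 = i then 1 else 0)) := by
    unfold degB
    exact sum_image_le σ (kmap kap) _
  calc degB (σ.image (kmap kap)) i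
      ≤ ∑ p ∈ σ, eptc kap i p := by
        refine hle.trans (le_of_eq (Finset.sum_congr rfl fun p _ => eptc_kmap kap i p))
    _ = ((verts σ).filter fun x => kap x = i).card := (verts_filter_card_eq kap hσ i).symm
    _ ≤ (univ.filter fun x => kap x = i).card := by
        apply Finset.card_le_card
        intro x hx
        simp only [Finset.mem_filter] at hx ⊢
        exact ⟨Finset.mem_univ x, hx.2⟩
    _ = lam i := hkap i

lemma isBD_image (hkap : KapFib lam kap) {σ : Finset (Fin N × Fin N)}
    (hσ : IsMatching N σ) : IsBDGraph lam (σ.image (kmap kap)) := by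
  refine ⟨?_, degB_image_le lam kap hkap hσ⟩
  rintro p hp
  simp only [Finset.mem_image] at hp
  obtain ⟨q, -, rfl⟩ := hp
  exact min_le_max

/-- The lifts of the graph `τ` to matchings with `c` edges. -/
def liftsF (τ : Finset (Fin n × Fin n)) (c : ℕ) : Finset (Finset (Fin N × Fin N)) :=
  univ.filter fun σ => IsMatching N σ ∧ σ.card = c ∧ σ.image (kmap kap) = τ

lemma mem_liftsF {τ : Finset (Fin n × Fin n)} {c : ℕ} {σ : Finset (Fin N × Fin N)} :
    σ ∈ liftsF kap τ c ↔ IsMatching N σ ∧ σ.card = c ∧ σ.image (kmap kap) = τ := by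
  simp [liftsF]

lemma lift_injOn {τ : Finset (Fin n × Fin n)} {c : ℕ} {σ : Finset (Fin N × Fin N)}
    (hτ : τ.card = c) (hσ : σ ∈ liftsF kap τ c) : Set.InjOn (kmap kap) σ := by
  rw [mem_liftsF] at hσ
  exact Finset.card_image_iff.1 (by rw [hσ.2.2, hτ, hσ.2.1])

/-- Possible new edges over `a` extending the partial matching `w`. -/
def ExtF (w : Finset (Fin N × Fin N)) (a : Fin n × Fin n) : Finset (Fin N × Fin N) :=
  univ.filter fun e => e.1 < e.2 ∧ kmap kap e = a ∧ e.1 ∉ verts w ∧ e.2 ∉ verts w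

lemma mem_ExtF {w : Finset (Fin N × Fin N)} {a : Fin n × Fin n} {e : Fin N × Fin N} :
    e ∈ ExtF kap w a ↔ e.1 < e.2 ∧ kmap kap e = a ∧ e.1 ∉ verts w ∧ e.2 ∉ verts w := by
  simp [ExtF]

/-- The free vertices of block `i`. -/
def FreeF (w : Finset (Fin N × Fin N)) (i : Fin n) : Finset (Fin N) :=
  univ.filter fun x => kap x = i ∧ x ∉ verts w

lemma FreeF_card (hkap : KapFib lam kap) {τ : Finset (Fin n × Fin n)} {c : ℕ}
    {w : Finset (Fin N × Fin N)} (hτ : τ.card = c) (hw : w ∈ liftsF kap τ c) (i : Fin n) :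
    (FreeF kap w i).card + degB τ i = lam i := by
  have hfib := hkap i
  have hw' := (mem_liftsF kap).1 hw
  have hused : ((verts w).filter fun x => kap x = i).card = degB τ i := by
    rw [verts_filter_card_eq kap hw'.1 i]
    have h1 : ∑ p ∈ w, eptc kap i p
        = ∑ p ∈ w, ((if (kmap kap p).1 = i then 1 else 0)
          + (if (kmap kap p).2 = i then 1 else 0)) :=
      Finset.sum_congr rfl fun p _ => (eptc_kmap kap i p).symm
    rw [h1, ← Finset.sum_image (g := kmap kap)
      (f := fun a => ((if a.1 = i then 1 else 0) + (if a.2 = i then 1 else 0) : ℕ))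
      (fun x hx y hy hxy => lift_injOn kap hτ hw hx hy hxy), hw'.2.2]
    rfl
  have hsplitcard := Finset.card_filter_add_card_filter_not
    (s := univ.filter fun x => kap x = i) (p := fun x => x ∈ verts w)
  have h1 : ((univ.filter fun x => kap x = i).filter fun x => x ∈ verts w)
      = (verts w).filter fun x => kap x = i := by
    ext x
    simp only [Finset.mem_filter, Finset.mem_univ, true_and]
    exact and_comm
  have h2 : ((univ.filter fun x => kap x = i).filter fun x => ¬ x ∈ verts w)
      = FreeF kap w i := by
    ext x
    simp [FreeF]
  rw [h1, h2, hused] at hsplitcard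
  omega

lemma mem_FreeF {w : Finset (Fin N × Fin N)} {i : Fin n} {x : Fin N} :
    x ∈ FreeF kap w i ↔ kap x = i ∧ x ∉ verts w := by
  simp [FreeF]

lemma kmap_eval {x y : Fin N} : kmap kap (x, y) = (min (kap x) (kap y), max (kap x) (kap y)) :=
  rfl

lemma ExtF_card_ne {w : Finset (Fin N × Fin N)} {a : Fin n × Fin n} (ha : a.1 < a.2) :
    (ExtF kap w a).card = (FreeF kap w a.1).card * (FreeF kap w a.2).card := by
  classical
  rw [← Finset.card_product]
  apply Finset.card_nbij' (i := fun e => if kap e.1 = a.1 then e else (e.2, e.1))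
    (j := fun q => (min q.1 q.2, max q.1 q.2))
  · intro e he
    beta_reduce
    rw [Finset.mem_coe]
    obtain ⟨hlt, hk, h1, h2⟩ := (mem_ExtF kap).1 he
    have hk' : (min (kap e.1) (kap e.2), max (kap e.1) (kap e.2)) = a := hk
    have hmin : min (kap e.1) (kap e.2) = a.1 := by rw [← hk']
    have hmax : max (kap e.1) (kap e.2) = a.2 := by rw [← hk']
    by_cases hc : kap e.1 = a.1
    · have hc2 : kap e.2 = a.2 := by
        rcases le_total (kap e.1) (kap e.2) with h | h
        · rw [max_eq_right h] at hmax
          exact hmax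
        · rw [max_eq_left h] at hmax
          exact absurd (hc.symm.trans hmax) (ne_of_lt ha)
      rw [if_pos hc]
      rw [Finset.mem_product]
      exact ⟨(mem_FreeF kap).2 ⟨hc, h1⟩, (mem_FreeF kap).2 ⟨hc2, h2⟩⟩
    · have hd : kap e.2 = a.1 ∧ kap e.1 = a.2 := by
        rcases le_total (kap e.1) (kap e.2) with h | h
        · rw [min_eq_left h] at hmin
          exact absurd hmin hc
        · rw [min_eq_right h] at hmin
          rw [max_eq_left h] at hmax
          exact ⟨hmin, hmax⟩
      rw [if_neg hc]
      rw [Finset.mem_product]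
      exact ⟨(mem_FreeF kap).2 ⟨hd.1, h2⟩, (mem_FreeF kap).2 ⟨hd.2, h1⟩⟩
  · intro q hq
    beta_reduce
    rw [Finset.mem_coe]
    obtain ⟨hq1, hq2⟩ := Finset.mem_product.1 hq
    obtain ⟨hk1, hv1⟩ := (mem_FreeF kap).1 hq1
    obtain ⟨hk2, hv2⟩ := (mem_FreeF kap).1 hq2
    have hne : q.1 ≠ q.2 := by
      intro h
      rw [h, hk2] at hk1
      exact absurd hk1 (ne_of_gt ha)
    rw [mem_ExtF]
    refine ⟨min_lt_max.2 hne, ?_, ?_, ?_⟩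
    · rcases le_total q.1 q.2 with h | h
      · rw [min_eq_left h, max_eq_right h, kmap_eval, hk1, hk2,
          min_eq_left ha.le, max_eq_right ha.le]
      · rw [min_eq_right h, max_eq_left h, kmap_eval, hk1, hk2,
          min_eq_right ha.le, max_eq_left ha.le]
    · rcases le_total q.1 q.2 with h | h
      · rw [min_eq_left h]
        exact hv1
      · rw [min_eq_right h]
        exact hv2
    · rcases le_total q.1 q.2 with h | h
      · rw [max_eq_right h]
        exact hv2
      · rw [max_eq_left h]
        exact hv1
  · intro e he
    beta_reduce
    obtain ⟨hlt, hk, h1, h2⟩ := (mem_ExtF kap).1 he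
    by_cases hc : kap e.1 = a.1
    · rw [if_pos hc]
      rw [show min e.1 e.2 = e.1 from min_eq_left hlt.le,
        show max e.1 e.2 = e.2 from max_eq_right hlt.le]
    · rw [if_neg hc]
      rw [show min (e.2, e.1).1 (e.2, e.1).2 = e.1 from min_eq_right hlt.le,
        show max (e.2, e.1).1 (e.2, e.1).2 = e.2 from max_eq_left hlt.le]
  · intro q hq
    beta_reduce
    obtain ⟨hq1, hq2⟩ := Finset.mem_product.1 hq
    obtain ⟨hk1, hv1⟩ := (mem_FreeF kap).1 hq1
    obtain ⟨hk2, hv2⟩ := (mem_FreeF kap).1 hq2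
    have hne : q.1 ≠ q.2 := by
      intro h
      rw [h, hk2] at hk1
      exact absurd hk1 (ne_of_gt ha)
    rcases lt_or_gt_of_ne hne with h | h
    · rw [min_eq_left h.le, max_eq_right h.le]
      simp only
      rw [if_pos hk1]
    · rw [min_eq_right h.le, max_eq_left h.le]
      simp only
      rw [if_neg (by simpa [hk2] using ne_of_gt ha)]

lemma ExtF_card_loop {w : Finset (Fin N × Fin N)} (i : Fin n) :
    (ExtF kap w (i, i)).card * 2
      = (FreeF kap w i).card * ((FreeF kap w i).card - 1) := by
  classical
  set F := FreeF kap w i with hF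
  have hset : ExtF kap w (i, i) = (F ×ˢ F).filter fun p => p.1 < p.2 := by
    ext e
    simp only [mem_ExtF, Finset.mem_filter, Finset.mem_product, hF, mem_FreeF]
    constructor
    · rintro ⟨hlt, hk, h1, h2⟩
      have hk' : (min (kap e.1) (kap e.2), max (kap e.1) (kap e.2)) = (i, i) := hk
      have hmin : min (kap e.1) (kap e.2) = i := by
        exact congrArg Prod.fst hk'
      have hmax : max (kap e.1) (kap e.2) = i := by
        exact congrArg Prod.snd hk'
      have e1 : kap e.1 = i :=
        le_antisymm (hmax ▸ le_max_left _ _) (hmin ▸ min_le_left _ _)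
      have e2 : kap e.2 = i :=
        le_antisymm (hmax ▸ le_max_right _ _) (hmin ▸ min_le_right _ _)
      exact ⟨⟨⟨e1, h1⟩, e2, h2⟩, hlt⟩
    · rintro ⟨⟨⟨hx, hxv⟩, hy, hyv⟩, hlt⟩
      refine ⟨hlt, ?_, hxv, hyv⟩
      rw [kmap_eval, hx, hy, min_self, max_self]
  rw [hset]
  have hswap : ((F ×ˢ F).filter fun p => p.1 < p.2).card
      = ((F ×ˢ F).filter fun p => p.2 < p.1).card := by
    apply Finset.card_nbij' (i := Prod.swap) (j := Prod.swap)
    · intro p hp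
      simp only [Finset.mem_coe, Finset.mem_filter, Finset.mem_product] at hp ⊢
      exact ⟨⟨hp.1.2, hp.1.1⟩, hp.2⟩
    · intro p hp
      simp only [Finset.mem_coe, Finset.mem_filter, Finset.mem_product] at hp ⊢
      exact ⟨⟨hp.1.2, hp.1.1⟩, hp.2⟩
    · intro p _
      simp
    · intro p _
      simp
  have h1 := Finset.card_filter_add_card_filter_not
    (s := F ×ˢ F) (p := fun p => p.1 < p.2)
  have h2 := Finset.card_filter_add_card_filter_not
    (s := (F ×ˢ F).filter fun p => ¬ p.1 < p.2) (p := fun p => p.2 < p.1)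
  have e2 : (((F ×ˢ F).filter fun p => ¬ p.1 < p.2).filter fun p => p.2 < p.1)
      = (F ×ˢ F).filter fun p => p.2 < p.1 := by
    rw [Finset.filter_filter]
    apply Finset.filter_congr
    intro p _
    constructor
    · rintro ⟨-, h⟩
      exact h
    · intro h
      exact ⟨asymm h, h⟩
  have e3 : (((F ×ˢ F).filter fun p => ¬ p.1 < p.2).filter fun p => ¬ p.2 < p.1)
      = (F ×ˢ F).filter fun p => p.1 = p.2 := by
    rw [Finset.filter_filter]
    apply Finset.filter_congr
    intro p _
    constructor
    · rintro ⟨ha, hb⟩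
      exact le_antisymm (not_lt.1 hb) (not_lt.1 ha)
    · rintro h
      exact ⟨by rw [h]; exact lt_irrefl _, by rw [h]; exact lt_irrefl _⟩
  have e4 : ((F ×ˢ F).filter fun p => p.1 = p.2).card = F.card := by
    apply Finset.card_nbij' (i := fun p => p.1) (j := fun x => (x, x))
    · intro p hp
      simp only [Finset.mem_coe, Finset.mem_filter, Finset.mem_product] at hp
      exact hp.1.1
    · intro x hx
      simp [Finset.mem_filter, Finset.mem_product, Finset.mem_coe.1 hx]
    · intro p hp
      simp only [Finset.mem_coe, Finset.mem_filter, Finset.mem_product] at hp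
      exact Prod.ext rfl hp.2
    · intro x _
      rfl
  have hprod : (F ×ˢ F).card = F.card * F.card := Finset.card_product F F
  have hkey : F.card * (F.card - 1) = F.card * F.card - F.card := by
    rw [mul_comm, Nat.sub_one_mul]
  rw [e2, e3, e4] at h2
  omega

lemma degB_erase {τ : Finset (Fin n × Fin n)} {a : Fin n × Fin n} (ha : a ∈ τ) (i : Fin n) :
    degB (τ.erase a) i + ((if a.1 = i then 1 else 0) + (if a.2 = i then 1 else 0))
      = degB τ i :=
  Finset.sum_erase_add τ _ ha

/-- The coefficient `∏ (λᵢ - dᵢ)! ⬝ 2^{#loops}`. -/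
def cCoefN (τ : Finset (Fin n × Fin n)) : ℕ :=
  (∏ i, (lam i - degB τ i).factorial) * 2 ^ (τ.filter fun a => a.1 = a.2).card

lemma cCoefN_empty : cCoefN lam (∅ : Finset (Fin n × Fin n)) = ∏ i, (lam i).factorial := by
  simp [cCoefN, degB]

lemma cCoefN_ratio (hkap : KapFib lam kap) {τ : Finset (Fin n × Fin n)} {c : ℕ}
    (hbd : IsBDGraph lam τ) (hτ : τ.card = c + 1) {a : Fin n × Fin n} (ha : a ∈ τ)
    {w : Finset (Fin N × Fin N)} (hw : w ∈ liftsF kap (τ.erase a) c) :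
    cCoefN lam (τ.erase a) = cCoefN lam τ * (ExtF kap w a).card := by
  classical
  have hτ' : (τ.erase a).card = c := by
    rw [Finset.card_erase_of_mem ha, hτ]
    omega
  have hfree : ∀ i, (FreeF kap w i).card + degB (τ.erase a) i = lam i :=
    fun i => FreeF_card lam kap hkap hτ' hw i
  have hdle : ∀ i, degB τ i ≤ lam i := hbd.2
  have hle : a.1 ≤ a.2 := hbd.1 a ha
  rcases lt_or_eq_of_le hle with hlt | hloop
  · -- non-loop edge
    have hne : a.1 ≠ a.2 := ne_of_lt hlt
    have hd1 : degB τ a.1 = degB (τ.erase a) a.1 + 1 := by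
      have hd := degB_erase ha a.1
      rw [if_pos rfl, if_neg (Ne.symm hne)] at hd
      omega
    have hd2 : degB τ a.2 = degB (τ.erase a) a.2 + 1 := by
      have hd := degB_erase ha a.2
      rw [if_neg hne, if_pos rfl] at hd
      omega
    have hdeq : ∀ i, i ≠ a.1 → i ≠ a.2 → degB (τ.erase a) i = degB τ i := by
      intro i hi1 hi2
      have hd := degB_erase ha i
      rw [if_neg (fun h => hi1 h.symm), if_neg (fun h => hi2 h.symm)] at hd
      omega
    have hf1 : (FreeF kap w a.1).card = (lam a.1 - degB τ a.1) + 1 := by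
      have := hfree a.1
      have := hdle a.1
      omega
    have hf2 : (FreeF kap w a.2).card = (lam a.2 - degB τ a.2) + 1 := by
      have := hfree a.2
      have := hdle a.2
      omega
    have hkey : ∀ i, (lam i - degB (τ.erase a) i).factorial
        = (lam i - degB τ i).factorial
          * ((if i = a.1 then (FreeF kap w a.1).card else 1)
            * (if i = a.2 then (FreeF kap w a.2).card else 1)) := by
      intro i
      by_cases h1 : i = a.1
      · rw [if_pos h1, if_neg (h1 ▸ hne), h1]
        have e3 : lam a.1 - degB (τ.erase a) a.1 = (lam a.1 - degB τ a.1) + 1 := by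
          have := hfree a.1
          have := hdle a.1
          omega
        rw [e3, Nat.factorial_succ, hf1, mul_one, mul_comm]
      · by_cases h2 : i = a.2
        · rw [if_neg h1, if_pos h2, h2]
          have e3 : lam a.2 - degB (τ.erase a) a.2 = (lam a.2 - degB τ a.2) + 1 := by
            have := hfree a.2
            have := hdle a.2
            omega
          rw [e3, Nat.factorial_succ, hf2, one_mul, mul_comm]
        · rw [if_neg h1, if_neg h2, hdeq i h1 h2, mul_one, mul_one]
    have hprodkey : (∏ i, (lam i - degB (τ.erase a) i).factorial)
        = (∏ i, (lam i - degB τ i).factorial)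
          * ((FreeF kap w a.1).card * (FreeF kap w a.2).card) := by
      calc (∏ i, (lam i - degB (τ.erase a) i).factorial)
          = ∏ i, ((lam i - degB τ i).factorial
            * ((if i = a.1 then (FreeF kap w a.1).card else 1)
              * (if i = a.2 then (FreeF kap w a.2).card else 1))) :=
            Finset.prod_congr rfl fun i _ => hkey i
        _ = (∏ i, (lam i - degB τ i).factorial)
            * ((∏ i, if i = a.1 then (FreeF kap w a.1).card else 1)
              * (∏ i, if i = a.2 then (FreeF kap w a.2).card else 1)) := by
            rw [Finset.prod_mul_distrib, Finset.prod_mul_distrib]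
        _ = _ := by
            rw [Finset.prod_ite_eq' univ a.1 fun _ => (FreeF kap w a.1).card,
              Finset.prod_ite_eq' univ a.2 fun _ => (FreeF kap w a.2).card,
              if_pos (Finset.mem_univ _), if_pos (Finset.mem_univ _)]
    have hloops : ((τ.erase a).filter fun p => p.1 = p.2)
        = (τ.filter fun p => p.1 = p.2) := by
      rw [Finset.filter_erase]
      exact Finset.erase_eq_of_notMem
        (fun hmem => hne ((Finset.mem_filter.1 hmem).2))
    rw [cCoefN, cCoefN, hloops, hprodkey, ExtF_card_ne kap hlt]
    ring
  · -- loop edge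
    have ha2 : a = (a.1, a.1) := Prod.ext rfl hloop.symm
    have haf : a ∈ τ.filter fun p => p.1 = p.2 := Finset.mem_filter.2 ⟨ha, hloop⟩
    have hd0 : degB τ a.1 = degB (τ.erase a) a.1 + 2 := by
      have hd := degB_erase ha a.1
      rw [if_pos rfl, if_pos hloop.symm] at hd
      omega
    have hdeq : ∀ i, i ≠ a.1 → degB (τ.erase a) i = degB τ i := by
      intro i hi
      have hd := degB_erase ha i
      rw [if_neg (fun h => hi h.symm), if_neg (fun h => hi (h.symm.trans hloop.symm))] at hd
      omega
    have hf : (FreeF kap w a.1).card = (lam a.1 - degB τ a.1) + 2 := by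
      have := hfree a.1
      have := hdle a.1
      omega
    have hkey : ∀ i, (lam i - degB (τ.erase a) i).factorial
        = (lam i - degB τ i).factorial
          * (if i = a.1 then (FreeF kap w a.1).card * ((FreeF kap w a.1).card - 1)
             else 1) := by
      intro i
      by_cases h1 : i = a.1
      · rw [if_pos h1, h1]
        have e3 : lam a.1 - degB (τ.erase a) a.1 = (lam a.1 - degB τ a.1) + 2 := by
          have := hfree a.1
          have := hdle a.1
          omega
        rw [e3, hf, show (lam a.1 - degB τ a.1) + 2 - 1 = (lam a.1 - degB τ a.1) + 1
          by omega, Nat.factorial_succ, Nat.factorial_succ]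
        ring
      · rw [if_neg h1, hdeq i h1, mul_one]
    have hprodkey : (∏ i, (lam i - degB (τ.erase a) i).factorial)
        = (∏ i, (lam i - degB τ i).factorial)
          * ((FreeF kap w a.1).card * ((FreeF kap w a.1).card - 1)) := by
      calc (∏ i, (lam i - degB (τ.erase a) i).factorial)
          = ∏ i, ((lam i - degB τ i).factorial
            * (if i = a.1 then (FreeF kap w a.1).card * ((FreeF kap w a.1).card - 1)
               else 1)) := Finset.prod_congr rfl fun i _ => hkey i
        _ = (∏ i, (lam i - degB τ i).factorial)
            * (∏ i, if i = a.1 then (FreeF kap w a.1).card * ((FreeF kap w a.1).card - 1)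
               else 1) := Finset.prod_mul_distrib
        _ = _ := by
            rw [Finset.prod_ite_eq' univ a.1
              fun _ => (FreeF kap w a.1).card * ((FreeF kap w a.1).card - 1),
              if_pos (Finset.mem_univ _)]
    have hLc : ((τ.erase a).filter fun p => p.1 = p.2).card + 1
        = (τ.filter fun p => p.1 = p.2).card := by
      rw [Finset.filter_erase, Finset.card_erase_of_mem haf]
      have : 0 < (τ.filter fun p => p.1 = p.2).card := Finset.card_pos.2 ⟨a, haf⟩
      omega
    have hExt2 : (ExtF kap w a).card * 2
        = (FreeF kap w a.1).card * ((FreeF kap w a.1).card - 1) := by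
      have h := ExtF_card_loop kap (w := w) a.1
      rwa [← ha2] at h
    apply Nat.eq_of_mul_eq_mul_right (show (0:ℕ) < 2 by norm_num)
    have hpow : 2 ^ ((τ.erase a).filter fun p => p.1 = p.2).card * 2
        = 2 ^ (τ.filter fun p => p.1 = p.2).card := by
      rw [← pow_succ, hLc]
    rw [cCoefN, cCoefN, hprodkey, ← hExt2, ← hpow]
    ring

/-! #### The two chain maps -/

/-- The chain map `ρ = κ_♯ : C̃(M_N) → C̃(BD_n^λ)`. -/
def rhoM (c : ℕ) : SChain ℤ (IsMatching N) c →ₗ[ℤ] SChain ℤ (IsBDGraph lam) c :=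
  chainMap ℤ (rankP N) (rankP n) (kmap kap) (IsMatching N) (IsBDGraph lam) c

/-- The chain underlying the transfer of the face `τ`. -/
def psiChain (τ : Finset (Fin n × Fin n)) (c : ℕ) : SChain ℤ (IsMatching N) c :=
  ∑ σ ∈ liftsF kap τ c,
    (cCoefN lam τ : ℤ) • mapSign (rankP N) (rankP n) (kmap kap) σ •
      basisOrZero ℤ (IsMatching N) c σ

/-- The transfer chain map `ψ : C̃(BD_n^λ) → C̃(M_N)`. -/
def psiM (c : ℕ) : SChain ℤ (IsBDGraph lam) c →ₗ[ℤ] SChain ℤ (IsMatching N) c :=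
  Finsupp.lsum ℤ fun τ => LinearMap.toSpanSingleton ℤ _ (psiChain lam kap τ.1 c)

lemma psiM_single (c : ℕ)
    (τ : {σ : Finset (Fin n × Fin n) // IsBDGraph lam σ ∧ σ.card = c}) :
    psiM lam kap c (Finsupp.single τ 1) = psiChain lam kap τ.1 c := by
  unfold psiM
  rw [Finsupp.lsum_single, LinearMap.toSpanSingleton_apply, one_smul]

/-- Key bijection: pairs (lift of `τ`, edge over `a`) correspond to pairs
(lift of `τ.erase a`, extension edge). -/
lemma lift_pair_sum {M : Type*} [AddCommMonoid M] {τ : Finset (Fin n × Fin n)} {c : ℕ}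
    (hτ : τ.card = c + 1) {a : Fin n × Fin n} (ha : a ∈ τ)
    (F : Finset (Fin N × Fin N) → (Fin N × Fin N) → M) :
    ∑ σ ∈ liftsF kap τ (c + 1), ∑ e ∈ σ.filter (fun e => kmap kap e = a), F σ e
      = ∑ w ∈ liftsF kap (τ.erase a) c, ∑ e ∈ ExtF kap w a, F (insert e w) e := by
  classical
  rw [Finset.sum_sigma' (liftsF kap τ (c + 1))
      (fun σ => σ.filter fun e => kmap kap e = a) (fun σ e => F σ e),
    Finset.sum_sigma' (liftsF kap (τ.erase a) c)
      (fun w => ExtF kap w a) (fun w e => F (insert e w) e)]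
  apply Finset.sum_nbij' (i := fun p => ⟨p.1.erase p.2, p.2⟩)
    (j := fun q => ⟨insert q.2 q.1, q.2⟩)
  · rintro ⟨σ, e⟩ hp
    obtain ⟨hσ, hef⟩ := Finset.mem_sigma.1 hp
    obtain ⟨he, hke⟩ := Finset.mem_filter.1 hef
    obtain ⟨hm, hcard, himg⟩ := (mem_liftsF kap).1 hσ
    rw [Finset.mem_sigma]
    constructor
    · rw [mem_liftsF]
      refine ⟨matching_subset hm (Finset.erase_subset _ _), ?_, ?_⟩
      · rw [Finset.card_erase_of_mem he, hcard]
        omega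
      · rw [image_erase_injOn (lift_injOn kap hτ hσ) he, himg, hke]
    · rw [mem_ExtF]
      exact ⟨hm.1 e he, hke, (not_mem_verts_erase hm he).1, (not_mem_verts_erase hm he).2⟩
  · rintro ⟨w, e⟩ hq
    obtain ⟨hw, hee⟩ := Finset.mem_sigma.1 hq
    obtain ⟨hm', hcard', himg'⟩ := (mem_liftsF kap).1 hw
    obtain ⟨hlt, hke, h1, h2⟩ := (mem_ExtF kap).1 hee
    have hew : e ∉ w := fun hew => h1 (mem_verts.2 ⟨e, hew, Or.inl rfl⟩)
    rw [Finset.mem_sigma]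
    constructor
    · rw [mem_liftsF]
      refine ⟨matching_insert hm' hlt h1 h2, ?_, ?_⟩
      · rw [Finset.card_insert_of_notMem hew, hcard']
      · rw [Finset.image_insert, himg', hke, Finset.insert_erase ha]
    · exact Finset.mem_filter.2 ⟨Finset.mem_insert_self e w, hke⟩
  · rintro ⟨σ, e⟩ hp
    obtain ⟨hσ, hef⟩ := Finset.mem_sigma.1 hp
    obtain ⟨he, hke⟩ := Finset.mem_filter.1 hef
    simp only
    rw [Finset.insert_erase he]
  · rintro ⟨w, e⟩ hq
    obtain ⟨hw, hee⟩ := Finset.mem_sigma.1 hq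
    obtain ⟨hlt, hke, h1, h2⟩ := (mem_ExtF kap).1 hee
    have hew : e ∉ w := fun hew => h1 (mem_verts.2 ⟨e, hew, Or.inl rfl⟩)
    simp only
    rw [Finset.erase_insert hew]
  · rintro ⟨σ, e⟩ hp
    obtain ⟨hσ, hef⟩ := Finset.mem_sigma.1 hp
    obtain ⟨he, hke⟩ := Finset.mem_filter.1 hef
    simp only
    rw [Finset.insert_erase he]

lemma filter_kmap_card_one {τ : Finset (Fin n × Fin n)} {c : ℕ} (hτ : τ.card = c)
    {σ : Finset (Fin N × Fin N)} (hσ : σ ∈ liftsF kap τ c) {a : Fin n × Fin n}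
    (ha : a ∈ τ) : (σ.filter fun e => kmap kap e = a).card = 1 := by
  have himg := (mem_liftsF kap).1 hσ
  obtain ⟨e, he, hfe⟩ := Finset.mem_image.1 (by rw [himg.2.2]; exact ha :
    a ∈ σ.image (kmap kap))
  rw [Finset.card_eq_one]
  refine ⟨e, ?_⟩
  ext e'
  simp only [mem_filter, mem_singleton]
  constructor
  · rintro ⟨he', hfe'⟩
    exact lift_injOn kap hτ hσ he' he (hfe'.trans hfe.symm)
  · rintro rfl
    exact ⟨he, hfe⟩

lemma count_key (hkap : KapFib lam kap) (c : ℕ) (τ : Finset (Fin n × Fin n))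
    (hbd : IsBDGraph lam τ) (hc : τ.card = c) :
    cCoefN lam τ * (liftsF kap τ c).card = ∏ i, (lam i).factorial := by
  induction c generalizing τ with
  | zero =>
    have hτ : τ = ∅ := Finset.card_eq_zero.1 hc
    subst hτ
    have hlift : liftsF (N := N) kap (∅ : Finset (Fin n × Fin n)) 0 = {∅} := by
      ext σ
      simp only [mem_liftsF, Finset.mem_singleton]
      constructor
      · rintro ⟨-, hcard, -⟩
        exact Finset.card_eq_zero.1 hcard
      · rintro rfl
        exact ⟨⟨fun p hp => absurd hp (Finset.notMem_empty p),
          fun p hp => absurd hp (Finset.notMem_empty p)⟩, by simp, by simp⟩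
    rw [hlift, cCoefN_empty]
    simp
  | succ c ih =>
    obtain ⟨a, ha⟩ := Finset.card_pos.1 (show 0 < τ.card by omega)
    have hbd' : IsBDGraph lam (τ.erase a) := isBD_subset hbd (Finset.erase_subset _ _)
    have hc' : (τ.erase a).card = c := by
      rw [Finset.card_erase_of_mem ha, hc]
      omega
    have hcount := lift_pair_sum (N := N) kap (hτ := hc) (ha := ha)
      (F := fun _ _ => (1 : ℕ))
    have hL : (liftsF kap τ (c + 1)).card
        = ∑ w ∈ liftsF kap (τ.erase a) c, (ExtF kap w a).card := by
      calc (liftsF kap τ (c + 1)).card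
          = ∑ _σ ∈ liftsF kap τ (c + 1), 1 := (Finset.card_eq_sum_ones _)
        _ = ∑ σ ∈ liftsF kap τ (c + 1),
            ∑ _e ∈ σ.filter (fun e => kmap kap e = a), 1 := by
            refine Finset.sum_congr rfl fun σ hσ => ?_
            rw [Finset.sum_const, smul_eq_mul, mul_one,
              filter_kmap_card_one kap hc hσ ha]
        _ = ∑ w ∈ liftsF kap (τ.erase a) c, ∑ _e ∈ ExtF kap w a, 1 := hcount
        _ = ∑ w ∈ liftsF kap (τ.erase a) c, (ExtF kap w a).card := by
            refine Finset.sum_congr rfl fun w _ => ?_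
            rw [Finset.sum_const, smul_eq_mul, mul_one]
    calc cCoefN lam τ * (liftsF kap τ (c + 1)).card
        = ∑ w ∈ liftsF kap (τ.erase a) c, cCoefN lam τ * (ExtF kap w a).card := by
          rw [hL, Finset.mul_sum]
      _ = ∑ _w ∈ liftsF kap (τ.erase a) c, cCoefN lam (τ.erase a) := by
          refine Finset.sum_congr rfl fun w hw => ?_
          exact (cCoefN_ratio lam kap hkap hbd hc ha hw).symm
      _ = cCoefN lam (τ.erase a) * (liftsF kap (τ.erase a) c).card := by
          rw [Finset.sum_const, smul_eq_mul, mul_comm]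
      _ = ∏ i, (lam i).factorial := ih (τ.erase a) hbd' hc' 

/-! #### The chain map identities -/

theorem rho_comp_bdry (hkap : KapFib lam kap) (c : ℕ) :
    (rhoM lam kap c).comp (bdry ℤ (rankP N) (IsMatching N) c)
      = (bdry ℤ (rankP n) (IsBDGraph lam) c).comp (rhoM lam kap (c + 1)) := by
  classical
  apply Finsupp.lhom_ext'
  intro σh
  apply LinearMap.ext_ring
  simp only [LinearMap.comp_apply, Finsupp.lsingle_apply]
  rw [show rhoM lam kap (c + 1) = chainMap ℤ (rankP N) (rankP n) (kmap kap)
    (IsMatching N) (IsBDGraph lam) (c + 1) from rfl, chainMap_single, bdry_single, map_sum]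
  have hterm : ∀ e ∈ σh.1,
      rhoM lam kap c (eps (rankP N) σh.1 e • basisOrZero ℤ (IsMatching N) c (σh.1.erase e))
      = eps (rankP N) σh.1 e • (mapSign (rankP N) (rankP n) (kmap kap) (σh.1.erase e) •
          basisOrZero ℤ (IsBDGraph lam) c ((σh.1.erase e).image (kmap kap))) := by
    intro e he
    rw [map_smul, basisOrZero_pos (IsMatching N) c _
      ⟨matching_subset σh.2.1 (Finset.erase_subset _ _),
        by rw [Finset.card_erase_of_mem he, σh.2.2]; omega⟩]
    rw [show rhoM lam kap c = chainMap ℤ (rankP N) (rankP n) (kmap kap)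
      (IsMatching N) (IsBDGraph lam) c from rfl, chainMap_single]
  rw [Finset.sum_congr rfl hterm]
  by_cases hinj : (σh.1.image (kmap kap)).card = c + 1
  · -- injective case
    have hInj : Set.InjOn (kmap kap) (σh.1 : Set (Fin N × Fin N)) :=
      Finset.card_image_iff.1 (by rw [hinj, σh.2.2])
    rw [basisOrZero_pos (IsBDGraph lam) (c + 1) _
      ⟨isBD_image lam kap hkap σh.2.1, hinj⟩, map_smul, bdry_single, Finset.smul_sum]
    rw [Finset.sum_image (fun x hx y hy hxy => hInj hx hy hxy)]
    refine Finset.sum_congr rfl fun e he => ?_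
    rw [image_erase_injOn hInj he, smul_smul, smul_smul]
    congr 1
    exact sign_compat'' (rankP_injective N) (rankP_injective n) hInj he
  · -- degenerate case
    have hle : (σh.1.image (kmap kap)).card ≤ c + 1 := by
      have h1 := Finset.card_image_le (s := σh.1) (f := kmap kap)
      have h2 := σh.2.2
      omega
    rw [basisOrZero_neg _ _ _ (fun h => hinj h.2), smul_zero, map_zero]
    by_cases hc2 : (σh.1.image (kmap kap)).card = c
    · obtain ⟨e₀, e₁, h₀, h₁, hne, hfe, hinj0, hinj1, himg0, himg1, hrest⟩ :=
        collision_structure σh.2.2 hc2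
      have h₁' : e₁ ∈ σh.1.erase e₀ := Finset.mem_erase.2 ⟨Ne.symm hne, h₁⟩
      have hz : ∀ e ∈ (σh.1.erase e₀).erase e₁,
          eps (rankP N) σh.1 e • (mapSign (rankP N) (rankP n) (kmap kap) (σh.1.erase e) •
            basisOrZero ℤ (IsBDGraph lam) c ((σh.1.erase e).image (kmap kap))) = 0 := by
        intro e he'
        have he0 : e ≠ e₁ := (Finset.mem_erase.1 he').1
        have he1 : e ≠ e₀ := (Finset.mem_erase.1 (Finset.mem_erase.1 he').2).1
        have hes : e ∈ σh.1 := (Finset.mem_erase.1 (Finset.mem_erase.1 he').2).2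
        rw [basisOrZero_neg _ _ _ (fun h => by
          have := hrest e hes he1 he0
          omega), smul_zero, smul_zero]
      rw [← Finset.sum_erase_add _ _ h₀, ← Finset.sum_erase_add _ _ h₁',
        Finset.sum_eq_zero hz, zero_add, himg0, himg1, smul_smul, smul_smul, ← add_smul,
        sign_cancel (rankP_injective N) (rankP_injective n) h₁ h₀ (Ne.symm hne) hfe.symm
          hinj1, zero_smul]
    · apply Finset.sum_eq_zero
      intro e he
      have hsub : ((σh.1.erase e).image (kmap kap)).card ≤ (σh.1.image (kmap kap)).card :=
        Finset.card_le_card (Finset.image_subset_image (Finset.erase_subset _ _))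
      rw [basisOrZero_neg _ _ _ (fun h => by omega), smul_zero, smul_zero]

theorem bdry_comp_psi (hkap : KapFib lam kap) (c : ℕ) :
    (bdry ℤ (rankP N) (IsMatching N) c).comp (psiM lam kap (c + 1))
      = (psiM lam kap c).comp (bdry ℤ (rankP n) (IsBDGraph lam) c) := by
  classical
  apply Finsupp.lhom_ext'
  intro τh
  apply LinearMap.ext_ring
  simp only [LinearMap.comp_apply, Finsupp.lsingle_apply]
  rw [psiM_single, bdry_single, map_sum]
  have hRHS : ∀ a ∈ τh.1,
      psiM lam kap c (eps (rankP n) τh.1 a •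
        basisOrZero ℤ (IsBDGraph lam) c (τh.1.erase a))
      = eps (rankP n) τh.1 a • psiChain lam kap (τh.1.erase a) c := by
    intro a ha
    rw [map_smul, basisOrZero_pos _ _ _ ⟨isBD_subset τh.2.1 (Finset.erase_subset _ _),
      by rw [Finset.card_erase_of_mem ha, τh.2.2]; omega⟩, psiM_single]
  rw [Finset.sum_congr rfl hRHS]
  unfold psiChain
  rw [map_sum]
  set F₀ : Finset (Fin N × Fin N) → (Fin N × Fin N) → SChain ℤ (IsMatching N) c :=
    fun s e => (cCoefN lam τh.1 : ℤ) • (eps (rankP n) τh.1 (kmap kap e) •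
      (mapSign (rankP N) (rankP n) (kmap kap) (s.erase e) •
        basisOrZero ℤ (IsMatching N) c (s.erase e))) with hF₀
  have hstep : ∀ σ ∈ liftsF kap τh.1 (c + 1),
      bdry ℤ (rankP N) (IsMatching N) c ((cCoefN lam τh.1 : ℤ) •
        mapSign (rankP N) (rankP n) (kmap kap) σ •
          basisOrZero ℤ (IsMatching N) (c + 1) σ)
      = ∑ e ∈ σ, F₀ σ e := by
    intro σ hσ
    obtain ⟨hm, hcard, himg⟩ := (mem_liftsF kap).1 hσ
    rw [basisOrZero_pos _ _ _ ⟨hm, hcard⟩, map_smul, map_smul, bdry_single,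
      Finset.smul_sum, Finset.smul_sum]
    refine Finset.sum_congr rfl fun e he => ?_
    rw [hF₀]
    simp only
    rw [smul_smul, smul_smul, smul_smul, smul_smul]
    congr 1
    have hc' := sign_compat' (rankP_injective N) (rankP_injective n)
      (lift_injOn kap τh.2.2 hσ) he
    rw [himg] at hc'
    rw [mul_assoc, mul_assoc, hc']
  rw [Finset.sum_congr rfl hstep]
  calc ∑ σ ∈ liftsF kap τh.1 (c + 1), ∑ e ∈ σ, F₀ σ e
      = ∑ σ ∈ liftsF kap τh.1 (c + 1), ∑ a ∈ τh.1,
          ∑ e ∈ σ.filter (fun e => kmap kap e = a), F₀ σ e := by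
        refine Finset.sum_congr rfl fun σ hσ => ?_
        obtain ⟨hm, hcard, himg⟩ := (mem_liftsF kap).1 hσ
        exact (Finset.sum_fiberwise_of_maps_to (fun e he => by
          rw [← himg]
          exact Finset.mem_image_of_mem _ he) _).symm
    _ = ∑ a ∈ τh.1, ∑ σ ∈ liftsF kap τh.1 (c + 1),
          ∑ e ∈ σ.filter (fun e => kmap kap e = a), F₀ σ e := Finset.sum_comm
    _ = ∑ a ∈ τh.1, ∑ w ∈ liftsF kap (τh.1.erase a) c,
          ∑ e ∈ ExtF kap w a, F₀ (insert e w) e := by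
        refine Finset.sum_congr rfl fun a ha => ?_
        exact lift_pair_sum kap τh.2.2 ha F₀
    _ = ∑ a ∈ τh.1, eps (rankP n) τh.1 a • psiChain lam kap (τh.1.erase a) c := by
        refine Finset.sum_congr rfl fun a ha => ?_
        unfold psiChain
        rw [Finset.smul_sum]
        refine Finset.sum_congr rfl fun w hw => ?_
        have hconst : ∀ e ∈ ExtF kap w a, F₀ (insert e w) e
            = (cCoefN lam τh.1 : ℤ) • (eps (rankP n) τh.1 a •
              (mapSign (rankP N) (rankP n) (kmap kap) w •
                basisOrZero ℤ (IsMatching N) c w)) := by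
          intro e he
          obtain ⟨hlt, hke, h1, h2⟩ := (mem_ExtF kap).1 he
          have hew : e ∉ w := fun hew => h1 (mem_verts.2 ⟨e, hew, Or.inl rfl⟩)
          rw [hF₀]
          simp only
          rw [Finset.erase_insert hew, hke]
        rw [Finset.sum_congr rfl hconst, Finset.sum_const,
          ← Nat.cast_smul_eq_nsmul ℤ]
        simp only [smul_smul]
        congr 1
        have hratio := cCoefN_ratio lam kap hkap τh.2.1 τh.2.2 ha hw
        push_cast [hratio]
        ring

theorem rho_comp_psi (hkap : KapFib lam kap) (c : ℕ) :
    (rhoM lam kap c).comp (psiM lam kap c)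
      = ((∏ i, (lam i).factorial : ℕ) : ℤ) • LinearMap.id := by
  classical
  apply Finsupp.lhom_ext'
  intro τh
  apply LinearMap.ext_ring
  simp only [LinearMap.comp_apply, Finsupp.lsingle_apply, LinearMap.smul_apply,
    LinearMap.id_apply]
  rw [psiM_single]
  unfold psiChain
  rw [map_sum]
  have hcalc : ∀ σ ∈ liftsF kap τh.1 c,
      rhoM lam kap c ((cCoefN lam τh.1 : ℤ) •
        mapSign (rankP N) (rankP n) (kmap kap) σ •
          basisOrZero ℤ (IsMatching N) c σ)
      = (cCoefN lam τh.1 : ℤ) • Finsupp.single τh 1 := by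
    intro σ hσ
    obtain ⟨hm, hcard, himg⟩ := (mem_liftsF kap).1 hσ
    rw [map_smul, map_smul, basisOrZero_pos (IsMatching N) c σ ⟨hm, hcard⟩]
    rw [show rhoM lam kap c = chainMap ℤ (rankP N) (rankP n) (kmap kap)
      (IsMatching N) (IsBDGraph lam) c from rfl, chainMap_single, himg,
      basisOrZero_pos (IsBDGraph lam) c τh.1 ⟨τh.2.1, τh.2.2⟩]
    show (cCoefN lam τh.1 : ℤ) • mapSign (rankP N) (rankP n) (kmap kap) σ •
        mapSign (rankP N) (rankP n) (kmap kap) σ •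
          (Finsupp.single τh 1 : SChain ℤ (IsBDGraph lam) c)
      = (cCoefN lam τh.1 : ℤ) • Finsupp.single τh 1
    rw [smul_smul (mapSign (rankP N) (rankP n) (kmap kap) σ), mapSign_mul_self, one_smul]
  rw [Finset.sum_congr rfl hcalc, Finset.sum_const, ← Nat.cast_smul_eq_nsmul ℤ, smul_smul]
  congr 1
  have hcount := count_key lam kap hkap c τh.1 τh.2.1 τh.2.2
  push_cast [← hcount]
  ring

end Blocks

/-! #### Existence of a fiber map -/

lemma sigma_fiber_card {n : ℕ} (g : Fin n → ℕ) (i : Fin n) :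
    ((univ : Finset (Σ j, Fin (g j))).filter fun s => s.1 = i).card = g i := by
  have himg : ((univ : Finset (Σ j, Fin (g j))).filter fun s => s.1 = i)
      = (univ : Finset (Fin (g i))).map ⟨Sigma.mk i, sigma_mk_injective⟩ := by
    ext ⟨j, y⟩
    simp only [mem_filter, mem_univ, true_and, mem_map, Function.Embedding.coeFn_mk]
    constructor
    · rintro rfl
      exact ⟨y, rfl⟩
    · rintro ⟨y', hy⟩
      obtain ⟨h1, -⟩ := Sigma.mk.inj_iff.1 hy
      exact h1.symm
  rw [himg, Finset.card_map, Finset.card_univ, Fintype.card_fin]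

lemma exists_kap {N n : ℕ} (lam : Fin n → ℕ) (hsum : ∑ i, lam i = N) :
    ∃ kap : Fin N → Fin n, KapFib lam kap := by
  have hcard : Fintype.card (Σ i : Fin n, Fin (lam i)) = N := by
    simp [hsum]
  set e := Fintype.equivFinOfCardEq hcard with he
  refine ⟨fun x => (e.symm x).1, fun i => ?_⟩
  rw [← sigma_fiber_card lam i]
  apply Finset.card_nbij (fun x => e.symm x)
  · intro a ha
    simp only [mem_coe, mem_filter, mem_univ, true_and] at ha ⊢
    exact ha
  · intro a _ b _ hab
    exact e.symm.injective hab
  · rintro s hs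
    exact ⟨e s, by simpa using hs, by simp⟩

end MatchPaper
end


open MatchPaper in
/-- There is a homomorphism `H̃_d(BD_n^λ; ℤ) → H̃_d(M_N; ℤ)` whose kernel
has finite exponent dividing `λ₁! ⬝ λ₂! ⋯ λ_n!`. -/
theorem homomorphism_BDH_to_MH
    (N n : ℕ) (lam : Fin n → ℕ) (hsum : ∑ i, lam i = N) (dg : ℕ) :
    ∃ f : BDH ℤ lam dg →+ MH ℤ N dg,
      ∀ z : BDH ℤ lam dg, f z = 0 → (∏ i, Nat.factorial (lam i)) • z = 0 := by
    classical
  obtain ⟨kap, hkap⟩ := exists_kap lam hsum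
  have hcomm1 := bdry_comp_psi lam kap hkap dg
  have hcomm2 := bdry_comp_psi lam kap hkap (dg + 1)
  have h1 : ∀ x ∈ cycLow ℤ (rankP n) (IsBDGraph lam) (dg + 1),
      psiM lam kap (dg + 1) x ∈ cycLow ℤ (rankP N) (IsMatching N) (dg + 1) := by
    intro x hx
    have hx' : x ∈ LinearMap.ker (bdry ℤ (rankP n) (IsBDGraph lam) dg) := hx
    show psiM lam kap (dg + 1) x ∈ LinearMap.ker (bdry ℤ (rankP N) (IsMatching N) dg)
    rw [LinearMap.mem_ker] at hx' ⊢
    have h := LinearMap.congr_fun hcomm1 x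
    simp only [LinearMap.comp_apply] at h
    rw [h, hx', map_zero]
  set Z := cycLow ℤ (rankP n) (IsBDGraph lam) (dg + 1) with hZdef
  set Bd := LinearMap.range (bdry ℤ (rankP n) (IsBDGraph lam) (dg + 1)) with hBddef
  set Z' := cycLow ℤ (rankP N) (IsMatching N) (dg + 1) with hZ'def
  set Bd' := LinearMap.range (bdry ℤ (rankP N) (IsMatching N) (dg + 1)) with hBd'def
  set F₀ := (psiM lam kap (dg + 1)).restrict h1 with hF₀
  have h2 : Bd.comap Z.subtype ≤ (Bd'.comap Z'.subtype).comap F₀ := by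
    rintro x hx
    simp only [Submodule.mem_comap] at hx ⊢
    obtain ⟨b, hb⟩ := hx
    refine ⟨psiM lam kap (dg + 1 + 1) b, ?_⟩
    have h := LinearMap.congr_fun hcomm2 b
    simp only [LinearMap.comp_apply] at h
    rw [h, hb]
    rfl
  set F := Submodule.mapQ (Bd.comap Z.subtype) (Bd'.comap Z'.subtype) F₀ h2 with hF
  refine ⟨AddMonoidHom.mk' (fun z => F z) (map_add F), ?_⟩
  intro z hz
  obtain ⟨x, rfl⟩ := Submodule.Quotient.mk_surjective _ z
  simp only [AddMonoidHom.mk'_apply, hF, Submodule.mapQ_apply,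
    Submodule.Quotient.mk_eq_zero, Submodule.mem_comap, LinearMap.mem_range] at hz
  obtain ⟨b, hb⟩ := hz
  rw [← Nat.cast_smul_eq_nsmul ℤ, ← Submodule.Quotient.mk_smul,
    Submodule.Quotient.mk_eq_zero, Submodule.mem_comap]
  have hpsi := LinearMap.congr_fun (rho_comp_psi lam kap hkap (dg + 1))
    (x : SChain ℤ (IsBDGraph lam) (dg + 1))
  simp only [LinearMap.comp_apply, LinearMap.smul_apply, LinearMap.id_apply] at hpsi
  simp only [Submodule.coe_subtype, Submodule.coe_smul]
  rw [← hpsi]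
  have hb' : psiM lam kap (dg + 1) (x : SChain ℤ (IsBDGraph lam) (dg + 1))
      = bdry ℤ (rankP N) (IsMatching N) (dg + 1) b := by
    rw [hb]
    rfl
  rw [hb']
  have h := LinearMap.congr_fun (rho_comp_bdry lam kap hkap (dg + 1)) b
  simp only [LinearMap.comp_apply] at h
  rw [h]
  exact ⟨rhoM lam kap (dg + 1 + 1) b, rfl⟩
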